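/- arXiv:2105.05366 — 10 statements merged into one kernel-verified Lean document; each statement's English description precedes it below -/
import Mathlib

section
/- For every finite type α and every permutation π of α, in the pick-n-swap model with cells indexed by α, the minimum number N of pick-n-swap operations taken over all valid plans for π equals π.support.card + π.cycleType.card, i.e., the number of non-fixed points of π plus the number of cycles of length at least 2 in the cycle decomposition of π. (Both the lower bound, that every valid plan uses at least this many operations, and the existence of a valid plan with exactly this many operations, hold.) -/
/-- One pick-n-swap operation at cell `ℓ`: the state `(a, h)` becomes
`(Function.update a ℓ h, a ℓ)`. -/
def pnsStep {γ β : Type*} [DecidableEq γ]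
    (st : (γ → Option β) × Option β) (ℓ : γ) : (γ → Option β) × Option β :=
  (Function.update st.1 ℓ st.2, st.1 ℓ)

/-- Execute a plan (a list of cells) from a starting state. -/
def pnsExec {γ β : Type*} [DecidableEq γ]
    (start : (γ → Option β) × Option β) (plan : List γ) : (γ → Option β) × Option β :=
  plan.foldl pnsStep start

/-- A plan is valid for the permutation `π` (π i is the label of the item initially
at cell i) if executing it transforms the initial state into the sorted goal state. -/
def ValidPlan {α : Type*} [DecidableEq α] (π : Equiv.Perm α) (plan : List α) : Prop :=
  pnsExec (fun i => some (π i), none) plan = (fun i => some i, none)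

/-!
Encode a state as the permutation `σ` of `Option α` with `σ (some i)` the content of cell `i`
and `σ none` the held item; a pick-n-swap at `ℓ` replaces `σ` by `σ * swap (some ℓ) none`.
The potential `starCost none σ` counts the cells not holding their own item plus the cycles of
`σ` avoiding the hand `none`: it is `#π.support + card π.cycleType` initially, `0` at the goal.
Multiplying by `swap a o` changes `σ` only at `a` and `o`, so it keeps every other moved point
and every cycle through neither of them; only the contribution of `a` changes, and it drops by
at most one. Unless `σ = 1`, it drops by exactly one when the hand is empty and we pick any
misplaced item, or when the hand is full and we pick at the home cell of the held item.
-/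

open Equiv Finset

namespace Equiv.Perm

variable {β : Type*} [Fintype β] [DecidableEq β]

theorem mem_cycleFactorsFinset_mul_swap {σ c : Perm β} {a b : β}
    (hc : c ∈ σ.cycleFactorsFinset) (ha : a ∉ c.support) (hb : b ∉ c.support) :
    c ∈ (σ * swap a b).cycleFactorsFinset := by
  rw [mem_cycleFactorsFinset_iff] at hc ⊢
  refine ⟨hc.1, fun x hx => ?_⟩
  rw [hc.2 x hx, mul_apply, swap_apply_of_ne_of_ne (ne_of_mem_of_not_mem hx ha)
    (ne_of_mem_of_not_mem hx hb)]

theorem filter_cycleFactorsFinset_mul_swap (σ : Perm β) (a b : β) :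
    {c ∈ (σ * swap a b).cycleFactorsFinset | a ∉ c.support ∧ b ∉ c.support} =
      {c ∈ σ.cycleFactorsFinset | a ∉ c.support ∧ b ∉ c.support} := by
  refine Subset.antisymm (fun c hc => ?_) (fun c hc => ?_) <;> rw [mem_filter] at hc ⊢
  · refine ⟨?_, hc.2⟩
    simpa [mul_assoc] using mem_cycleFactorsFinset_mul_swap hc.1 hc.2.1 hc.2.2
  · exact ⟨mem_cycleFactorsFinset_mul_swap hc.1 hc.2.1 hc.2.2, hc.2⟩

theorem filter_cycleFactorsFinset_mem_support (σ : Perm β) (a b : β) :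
    {c ∈ σ.cycleFactorsFinset | a ∈ c.support ∧ b ∉ c.support} =
      if a ∈ σ.support ∧ ¬σ.SameCycle a b then {σ.cycleOf a} else ∅ := by
  ext c
  simp only [mem_filter]
  constructor
  · rintro ⟨hc, ha, hb⟩
    obtain rfl := cycle_is_cycleOf ha hc
    rw [mem_support_cycleOf_iff] at ha hb
    rw [if_pos ⟨ha.2, fun h => hb ⟨h, ha.2⟩⟩, mem_singleton]
  · split_ifs with h
    · rw [mem_singleton]
      rintro rfl
      rw [mem_support_cycleOf_iff, mem_support_cycleOf_iff]
      exact ⟨cycleOf_mem_cycleFactorsFinset_iff.2 h.1, ⟨SameCycle.refl _ _, h.1⟩,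
        fun h' => h.2 h'.1⟩
    · simp

def starCost (o : β) (σ : Perm β) : ℕ :=
  #(σ.support.erase o) + #{c ∈ σ.cycleFactorsFinset | o ∉ c.support}

theorem starCost_of_apply_eq_self {σ : Perm β} {o : β} (ho : σ o = o) :
    starCost o σ = #σ.support + Multiset.card σ.cycleType := by
  have ho' : o ∉ σ.support := notMem_support.2 ho
  have hcycles : ∀ c ∈ σ.cycleFactorsFinset, o ∉ c.support := fun c hc h =>
    ho' (mem_cycleFactorsFinset_support_le hc h)
  rw [starCost, erase_eq_of_notMem ho', filter_true_of_mem hcycles]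
  simp [cycleType_def]

@[simp]
theorem starCost_one (o : β) : starCost o (1 : Perm β) = 0 := by
  simp [starCost]

theorem starCost_eq_of_ne {a o : β} (hao : a ≠ o) (σ : Perm β) :
    starCost o σ = #((σ.support.erase o).erase a) +
      #{c ∈ σ.cycleFactorsFinset | a ∉ c.support ∧ o ∉ c.support} +
      (if a ∈ σ.support then 1 else 0) +
      (if a ∈ σ.support ∧ ¬σ.SameCycle a o then 1 else 0) := by
  have hsupp : #(σ.support.erase o) = #((σ.support.erase o).erase a) +
      if a ∈ σ.support then 1 else 0 := by
    split_ifs with ha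
    · exact (card_erase_add_one (mem_erase.2 ⟨hao, ha⟩)).symm
    · rw [erase_eq_of_notMem (fun h => ha (mem_of_mem_erase h)), add_zero]
  have hcycles := card_filter_add_card_filter_not
    (s := {c ∈ σ.cycleFactorsFinset | o ∉ c.support}) (fun c => a ∉ c.support)
  simp only [filter_filter, not_not, and_comm (a := o ∉ _)] at hcycles
  rw [starCost, hsupp, ← hcycles, filter_cycleFactorsFinset_mem_support]
  split_ifs <;> simp <;> omega

theorem erase_erase_support_mul_swap (σ : Perm β) (a o : β) :
    ((σ * swap a o).support.erase o).erase a = (σ.support.erase o).erase a := by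
  ext x
  simp +contextual [mem_support, swap_apply_of_ne_of_ne]

theorem starCost_le_starCost_mul_swap_add_one (σ : Perm β) (a o : β) :
    starCost o σ ≤ starCost o (σ * swap a o) + 1 := by
  rcases eq_or_ne a o with rfl | hao
  · rw [swap_self, ← one_def, mul_one]
    exact Nat.le_succ _
  have hτ : σ o ≠ a → a ∈ (σ * swap a o).support := by simp
  have hσ : σ o = a → σ.SameCycle a o := fun h => (sameCycle_apply_left.1 (h ▸ .refl _ _)).symm
  rw [starCost_eq_of_ne hao, starCost_eq_of_ne hao, erase_erase_support_mul_swap,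
    filter_cycleFactorsFinset_mul_swap]
  -- `a` loses both its contributions only if `σ o = a`, but then `a` and `o` share a cycle
  split_ifs <;> first | omega | tauto

theorem starCost_mul_swap_add_one_of_apply_eq_self {σ : Perm β} {a o : β}
    (ha : σ a ≠ a) (ho : σ o = o) : starCost o (σ * swap a o) + 1 = starCost o σ := by
  have hao : a ≠ o := fun h => ha (h ▸ ho)
  have hσ : ¬σ.SameCycle a o := fun h => hao (h.eq_of_right ho)
  have hτ : (σ * swap a o).SameCycle a o := by
    have hτa : (σ * swap a o) a = o := by simp [ho]
    have h := sameCycle_apply_right.2 (SameCycle.refl (σ * swap a o) a)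
    rwa [hτa] at h
  rw [starCost_eq_of_ne hao, starCost_eq_of_ne hao, erase_erase_support_mul_swap,
    filter_cycleFactorsFinset_mul_swap]
  simp [ho, hao.symm, hσ, hτ, ha]

theorem starCost_mul_swap_apply_add_one {σ : Perm β} {o : β} (ho : σ o ≠ o) :
    starCost o (σ * swap (σ o) o) + 1 = starCost o σ := by
  have hσ : σ.SameCycle (σ o) o := sameCycle_apply_left.2 (.refl _ _)
  rw [starCost_eq_of_ne ho, starCost_eq_of_ne ho, erase_erase_support_mul_swap,
    filter_cycleFactorsFinset_mul_swap]
  simp [ho, hσ]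

theorem exists_starCost_mul_swap_lt {σ : Perm β} (hσ : σ ≠ 1) (o : β) :
    ∃ a ≠ o, starCost o (σ * swap a o) < starCost o σ := by
  by_cases ho : σ o = o
  · obtain ⟨a, ha⟩ : ∃ a, σ a ≠ a := not_forall.1 fun h => hσ (ext h)
    exact ⟨a, fun h => ha (h ▸ ho), by
      rw [← starCost_mul_swap_add_one_of_apply_eq_self ha ho]; omega⟩
  · exact ⟨σ o, ho, by rw [← starCost_mul_swap_apply_add_one ho]; omega⟩

theorem starCost_le_length (o : β) (L : List β) {σ : Perm β}
    (hσ : σ * (L.map (swap · o)).prod = 1) : starCost o σ ≤ L.length := by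
  induction L generalizing σ with
  | nil => simp_all
  | cons a L ih =>
    have := ih (σ := σ * swap a o) (by simpa [mul_assoc] using hσ)
    have := starCost_le_starCost_mul_swap_add_one σ a o
    simp only [List.length_cons]
    omega

theorem exists_mul_prod_swap_none_eq_one {α : Type*} [Fintype α] [DecidableEq α]
    (σ : Perm (Option α)) : ∃ L : List α,
      σ * ((L.map some).map (swap · none)).prod = 1 ∧ L.length ≤ starCost none σ := by
  induction h : starCost none σ using Nat.strong_induction_on generalizing σ with
  | _ n ih =>
    by_cases hσ : σ = 1
    · exact ⟨[], by simp [hσ], by simp⟩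
    obtain ⟨a, ha, hlt⟩ := exists_starCost_mul_swap_lt hσ none
    obtain ⟨x, rfl⟩ := Option.ne_none_iff_exists'.1 ha
    obtain ⟨L, hL, hlen⟩ := ih _ (h ▸ hlt) (σ * swap (some x) none) rfl
    exact ⟨x :: L, by simpa [mul_assoc] using hL, by simp; omega⟩

theorem optionCongr_eq_extendDomain {α : Type*} [DecidableEq α] (π : Perm α) :
    π.optionCongr = π.extendDomain (optionIsSomeEquiv α).symm := by
  ext (_ | i) : 1
  · rw [extendDomain_apply_not_subtype] <;> simp
  · exact (extendDomain_apply_image π (optionIsSomeEquiv α).symm i).symm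

theorem starCost_optionCongr {α : Type*} [Fintype α] [DecidableEq α] (π : Perm α) :
    starCost none π.optionCongr = #π.support + Multiset.card π.cycleType := by
  rw [starCost_of_apply_eq_self (by simp), optionCongr_eq_extendDomain,
    card_support_extend_domain, cycleType_extendDomain]

end Equiv.Perm

section PickNSwap

variable {α : Type*}

def permState (σ : Perm (Option α)) : (α → Option α) × Option α :=
  (fun i => σ (some i), σ none)

theorem permState_injective : Function.Injective (permState (α := α)) := by
  intro σ τ h
  ext (_ | i) : 1
  · exact congrArg Prod.snd h
  · exact congrFun (congrArg Prod.fst h) i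

variable [DecidableEq α]

theorem pnsStep_permState (σ : Perm (Option α)) (ℓ : α) :
    pnsStep (permState σ) ℓ = permState (σ * swap (some ℓ) none) := by
  ext i : 2
  · by_cases h : i = ℓ
    · subst h; simp [pnsStep, permState]
    · simp [pnsStep, permState, h, swap_apply_of_ne_of_ne]
  · simp [pnsStep, permState]

theorem pnsExec_permState (σ : Perm (Option α)) (plan : List α) :
    pnsExec (permState σ) plan = permState (σ * ((plan.map some).map (swap · none)).prod) := by
  induction plan generalizing σ with
  | nil => simp [pnsExec]
  | cons ℓ plan ih =>
    rw [pnsExec, List.foldl_cons, ← pnsExec, pnsStep_permState, ih]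
    simp [mul_assoc]

theorem validPlan_iff (π : Perm α) (plan : List α) :
    ValidPlan π plan ↔ π.optionCongr * ((plan.map some).map (swap · none)).prod = 1 := by
  rw [ValidPlan, ← permState_injective.eq_iff, ← pnsExec_permState]
  rfl

end PickNSwap

/-- The minimum number of pick-n-swap operations over all valid plans for `π`
equals the number of non-fixed points of `π` plus the number of nontrivial cycles
of `π`: it is a lower bound on the length of every valid plan and is attained. -/
theorem min_pick_n_swaps (α : Type*) [Fintype α] [DecidableEq α] (π : Equiv.Perm α) :
    IsLeast {N : ℕ | ∃ plan : List α, ValidPlan π plan ∧ plan.length = N}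
      (π.support.card + Multiset.card π.cycleType) := by
  have hlower (plan : List α) (h : ValidPlan π plan) :
      π.support.card + Multiset.card π.cycleType ≤ plan.length := by
    rw [validPlan_iff] at h
    simpa [Perm.starCost_optionCongr] using Perm.starCost_le_length none _ h
  obtain ⟨plan, hplan, hlen⟩ := Perm.exists_mul_prod_swap_none_eq_one π.optionCongr
  rw [← validPlan_iff] at hplan
  rw [Perm.starCost_optionCongr] at hlen
  exact ⟨⟨plan, hplan, hlen.antisymm (hlower plan hplan)⟩, fun N ⟨p, hp, hN⟩ => hN ▸ hlower p hp⟩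
end

section
/- For every m ≥ 1 and every permutation π of Fin m, every valid plan for π in the one-dimensional pick-n-swap model has total end-effector travel at least Σ_{i : Fin m} |(π⁻¹ i : ℕ) − (i : ℕ)|, i.e., the sum over all items of the distance between the item's initial cell and its goal cell. -/
/-- Total end-effector travel of a 1D plan `p₁, …, p_N`: the sum of
`|p_{j+1} - p_j|` for `j = 0, …, N`, where `p₀ = p_{N+1} = 0` is the rest position. -/
def travel1D {m : ℕ} (hm : 0 < m) (plan : List (Fin m)) : ℤ :=
  ((((⟨0, hm⟩ : Fin m) :: plan).zip (plan ++ [(⟨0, hm⟩ : Fin m)])).map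
    (fun pq => |((pq.1 : ℕ) : ℤ) - ((pq.2 : ℕ) : ℤ)|)).sum

/-!
Place cell `c` at position `x c` on a line. The potential of a state, with the end-effector at
cell `p`, is the total distance of the items from their goal cells, the held item being measured
from `p`. It equals `Σ_i |x (π⁻¹ i) - x i|` initially and `0` in the goal state. A pick-n-swap at
the end-effector's own cell leaves it unchanged, and by the triangle inequality moving the
end-effector lowers it by at most the distance travelled.
-/

namespace PickNSwap

variable {γ : Type*} (x : γ → ℤ)

def pathLength : γ → List γ → ℤ
  | _, [] => 0
  | p, q :: l => |x p - x q| + pathLength q l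

theorem sum_map_zip_cons_append (plan : List γ) (p q : γ) :
    (((p :: plan).zip (plan ++ [q])).map fun c => |x c.1 - x c.2|).sum
      = pathLength x p (plan ++ [q]) := by
  induction plan generalizing p with
  | nil => simp [pathLength]
  | cons ℓ plan ih => simp [pathLength, ih]

variable [Fintype γ]

def potential (st : (γ → Option γ) × Option γ) (p : γ) : ℤ :=
  ∑ ℓ, (st.1 ℓ).elim 0 (fun i => |x ℓ - x i|) + st.2.elim 0 (fun i => |x p - x i|)

theorem potential_initial (π : Equiv.Perm γ) (p : γ) :
    potential x (fun i => some (π i), none) p = ∑ i, |x (π⁻¹ i) - x i| := by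
  simpa [potential] using Equiv.sum_comp π fun i => |x (π⁻¹ i) - x i|

theorem potential_sorted (p : γ) : potential x (fun i => some i, none) p = 0 := by
  simp [potential]

theorem potential_le_add (st : (γ → Option γ) × Option γ) (p q : γ) :
    potential x st p ≤ potential x st q + |x p - x q| := by
  rcases st with ⟨a, _ | i⟩
  · simp [potential]
  · simp only [potential, Option.elim_some]
    linarith [abs_sub_le (x p) (x q) (x i)]

variable [DecidableEq γ]

theorem potential_pnsStep_self (st : (γ → Option γ) × Option γ) (ℓ : γ) :
    potential x (pnsStep st ℓ) ℓ = potential x st ℓ := by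
  obtain ⟨a, h⟩ := st
  have hrest : ∀ c ∈ ({ℓ}ᶜ : Finset γ), (Function.update a ℓ h c).elim 0 (fun i => |x c - x i|)
      = (a c).elim 0 (fun i => |x c - x i|) := fun c hc => by
    rw [Function.update_of_ne (by simpa using hc)]
  simp only [potential, pnsStep]
  rw [Fintype.sum_eq_add_sum_compl ℓ, Fintype.sum_eq_add_sum_compl ℓ, Finset.sum_congr rfl hrest,
    Function.update_self]
  ring

theorem potential_le_pathLength_append (plan : List γ) (st : (γ → Option γ) × Option γ)
    (p q : γ) :
    potential x st p ≤ pathLength x p (plan ++ [q]) + potential x (pnsExec st plan) q := by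
  induction plan generalizing st p with
  | nil => simpa [pathLength, pnsExec, add_comm] using potential_le_add x st p q
  | cons ℓ plan ih =>
    have hmove := potential_le_add x st p ℓ
    have hrest := ih (pnsStep st ℓ) ℓ
    rw [potential_pnsStep_self] at hrest
    simp only [pnsExec, List.foldl_cons, List.cons_append, pathLength] at hrest ⊢
    linarith

variable {x}

theorem sum_abs_sub_le_pathLength {π : Equiv.Perm γ} {plan : List γ} (hplan : ValidPlan π plan)
    (p : γ) : ∑ i, |x (π⁻¹ i) - x i| ≤ pathLength x p (plan ++ [p]) := by
  have h := potential_le_pathLength_append x plan (fun i => some (π i), none) p p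
  rwa [hplan, potential_initial, potential_sorted, add_zero] at h

end PickNSwap

/-- Every valid plan for `π` in the one-dimensional pick-n-swap model has total
end-effector travel at least `Σ_i |π⁻¹ i − i|`. -/
theorem travel_lower_bound_1D {m : ℕ} (hm : 0 < m) (π : Equiv.Perm (Fin m))
    (plan : List (Fin m)) (hplan : ValidPlan π plan) :
    (∑ i : Fin m, |(((π⁻¹ i : Fin m) : ℕ) : ℤ) - ((i : ℕ) : ℤ)|) ≤ travel1D hm plan := by
  rw [travel1D, PickNSwap.sum_map_zip_cons_append (fun i : Fin m => ((i : ℕ) : ℤ))]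
  exact PickNSwap.sum_abs_sub_le_pathLength hplan _
end

section
/- For every m ≥ 1, the average over all permutations π of Fin m of the total displacement Σ_{i : Fin m} |(π i : ℕ) − (i : ℕ)| equals (m² − 1)/3; that is, (1/m!) · Σ_{π ∈ Equiv.Perm (Fin m)} Σ_{i : Fin m} |(π i : ℕ) − (i : ℕ)| = (m² − 1)/3 as real numbers. -/
/-!
Precomposing with a transposition shows that `∑_π g (π i)` does not depend on `i`; summing over
`i` then gives `m · ∑_π g (π i) = m! · ∑_j g j`, so each position `i` contributes the mean
`(1/m) ∑_j |j - i|` to the average displacement. It remains to evaluate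
`∑_{i,j<m} |i - j| = m (m² - 1) / 3`, which follows by induction on `m`.
-/

open Finset Equiv

section PermSum

variable {α M : Type*} [Fintype α] [DecidableEq α] [AddCommMonoid M]

theorem Equiv.Perm.sum_apply_eq_sum_apply (g : α → M) (i i' : α) :
    ∑ σ : Perm α, g (σ i) = ∑ σ : Perm α, g (σ i') :=
  Fintype.sum_equiv (Equiv.mulRight (swap i i')) _ _ fun σ => by simp

theorem Equiv.Perm.card_smul_sum_apply (g : α → M) (i : α) :
    Fintype.card α • ∑ σ : Perm α, g (σ i) = (Fintype.card α).factorial • ∑ j, g j := calc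
  Fintype.card α • ∑ σ : Perm α, g (σ i) = ∑ i' : α, ∑ σ : Perm α, g (σ i') := by
    rw [← Finset.card_univ, ← Finset.sum_const]
    exact Finset.sum_congr rfl fun i' _ => Perm.sum_apply_eq_sum_apply g i i'
  _ = ∑ σ : Perm α, ∑ j, g j := by
    rw [Finset.sum_comm]
    exact Finset.sum_congr rfl fun σ _ => Equiv.sum_comp σ g
  _ = (Fintype.card α).factorial • ∑ j, g j := by
    rw [Finset.sum_const, Finset.card_univ, Fintype.card_perm]

end PermSum

theorem sum_range_natCast (n : ℕ) : ∑ j ∈ range n, (j : ℝ) = n * (n - 1) / 2 := by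
  induction n with
  | zero => simp
  | succ n ih => rw [sum_range_succ, ih]; push_cast; ring

theorem sum_range_abs_natCast_sub (n : ℕ) : ∑ j ∈ range n, |(n : ℝ) - j| = n * (n + 1) / 2 := by
  have hterm : ∀ j ∈ range n, |(n : ℝ) - j| = n - j := fun j hj =>
    abs_of_nonneg (sub_nonneg.mpr (by exact_mod_cast (mem_range.mp hj).le))
  rw [sum_congr rfl hterm, sum_sub_distrib, sum_const, card_range, sum_range_natCast, nsmul_eq_mul]
  ring

theorem sum_range_sum_range_abs_sub (n : ℕ) :
    ∑ i ∈ range n, ∑ j ∈ range n, |(i : ℝ) - j| = n * (n ^ 2 - 1) / 3 := by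
  induction n with
  | zero => simp
  | succ n ih =>
    have hcol : ∑ i ∈ range n, |(i : ℝ) - n| = n * (n + 1) / 2 := by
      simp_rw [abs_sub_comm _ (n : ℝ)]
      exact sum_range_abs_natCast_sub n
    simp only [sum_range_succ (f := fun j => |(_ : ℝ) - j|), sum_add_distrib]
    rw [sum_range_succ, sum_range_succ, ih, hcol, sum_range_abs_natCast_sub, sub_self, abs_zero]
    push_cast
    ring

theorem sum_fin_sum_fin_abs_sub (n : ℕ) :
    ∑ i : Fin n, ∑ j : Fin n, |((i : ℕ) : ℝ) - ((j : ℕ) : ℝ)| = n * (n ^ 2 - 1) / 3 := by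
  rw [Fin.sum_univ_eq_sum_range (fun i => ∑ j : Fin n, |(i : ℝ) - ((j : ℕ) : ℝ)|),
    ← sum_range_sum_range_abs_sub]
  exact sum_congr rfl fun i _ => Fin.sum_univ_eq_sum_range (fun j => |(i : ℝ) - j|) n

/-- The average over all permutations of `Fin m` of the total displacement
`Σ_i |π i − i|` equals `(m² − 1)/3`. -/
theorem average_total_displacement (m : ℕ) (hm : 1 ≤ m) :
    (1 / (Nat.factorial m : ℝ)) *
      ∑ π : Equiv.Perm (Fin m), ∑ i : Fin m, |((π i : ℕ) : ℝ) - ((i : ℕ) : ℝ)| =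
      ((m : ℝ) ^ 2 - 1) / 3 := by
  have hm0 : (m : ℝ) ≠ 0 := Nat.cast_ne_zero.mpr (by omega)
  have hfac : (m.factorial : ℝ) ≠ 0 := by positivity
  have hsum : (m : ℝ) * ∑ π : Perm (Fin m), ∑ i : Fin m, |((π i : ℕ) : ℝ) - ((i : ℕ) : ℝ)| =
      m.factorial * (m * (m ^ 2 - 1) / 3) := by
    rw [sum_comm, mul_sum, ← sum_fin_sum_fin_abs_sub, sum_comm, mul_sum]
    refine sum_congr rfl fun i _ => ?_
    simpa [nsmul_eq_mul] using
      Perm.card_smul_sum_apply (fun j : Fin m => |((j : ℕ) : ℝ) - ((i : ℕ) : ℝ)|) i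
  rw [one_div_mul_eq_div, div_eq_iff hfac]
  apply mul_left_cancel₀ hm0
  rw [hsum]
  ring
end

section
/- For every m ≥ 1, the expected minimum number of pick-n-swap operations needed to sort a uniformly random permutation of Fin m equals m + H_m − 2; equivalently, (1/m!) · Σ_{π ∈ Equiv.Perm (Fin m)} (π.support.card + π.cycleType.card) = m + H_m − 2, where H_m = Σ_{i=1}^{m} 1/i is the m-th harmonic number. -/
/-!
Each point of `Fin m` is fixed by `(m - 1)!` permutations, so a permutation has one fixed point
on average and its support has average size `m - 1`.

For the cycles, write a permutation of `Fin (n + 1)` as `swap 0 p * σ` with `σ 0 = 0`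
(`decomposeFin`). For `p ≠ 0` the swap either joins the fixed point `0` to the cycle through `p`,
leaving the number of nontrivial cycles unchanged, or, if `σ p = p`, creates a new 2-cycle.
Hence the total count `C n` of nontrivial cycles satisfies `C (n + 1) = (n + 1) C n + n!`, i.e.
`C n = n! (H n - 1)`.
-/

open Equiv Equiv.Perm Finset
open scoped Nat

namespace Equiv.Perm

variable {α : Type*} [DecidableEq α] [Fintype α]

-- `g (g a) ≠ a` says the cycle of `a` has length at least 3, so it stays nontrivial without `a`.
theorem card_cycleType_swap_mul_eq {g : Perm α} {a : α} (h : g (g a) ≠ a) :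
    Multiset.card (swap a (g a) * g).cycleType = Multiset.card g.cycleType := by
  have hga : g a ≠ a := fun h' => h (by rw [h', h'])
  set c := g.cycleOf a
  have hc : c ∈ g.cycleFactorsFinset := cycleOf_mem_cycleFactorsFinset_iff.2 (mem_support.2 hga)
  have hca : c a = g a := cycleOf_apply_self g a
  have hcca : c (c a) = g (g a) := by rw [hca, cycleOf_apply_apply_self]
  have hrest : Disjoint (g * c⁻¹) c := disjoint_mul_inv_of_mem_cycleFactorsFinset hc
  have hcycle : (swap a (c a) * c).IsCycle :=
    (isCycle_cycleOf g hga).swap_mul (hca ▸ hga) (hcca ▸ h)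
  have hdisj : Disjoint (swap a (c a) * c) (g * c⁻¹) :=
    hrest.symm.mono (by rw [support_swap_mul_eq c a (hcca ▸ h)]; exact sdiff_subset) le_rfl
  have hsplit : swap a (g a) * g = (swap a (c a) * c) * (g * c⁻¹) := by
    rw [hca, mul_assoc, ← hrest.commute.eq, inv_mul_cancel_right]
  have hcard : Multiset.card (swap a (c a) * c).cycleType = Multiset.card c.cycleType := by
    rw [hcycle.cycleType, (isCycle_cycleOf g hga).cycleType, Multiset.card_singleton,
      Multiset.card_singleton]
  rw [hsplit, hdisj.cycleType_mul, Multiset.card_add, hcard, ← Multiset.card_add,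
    cycleType_mul_inv_mem_cycleFactorsFinset_eq_sub hc,
    add_tsub_cancel_of_le (cycleType_le_of_mem_cycleFactorsFinset hc)]

theorem card_cycleType_swap_mul_of_apply_self {f : Perm α} {a b : α} (ha : f a = a)
    (hab : a ≠ b) :
    Multiset.card (swap a b * f).cycleType =
      Multiset.card f.cycleType + if f b = b then 1 else 0 := by
  split_ifs with hb
  · have hdisj : Disjoint (swap a b) f := by
      rw [disjoint_iff_disjoint_support, support_swap hab]
      simp [ha, hb]
    rw [hdisj.cycleType_mul, (isCycle_swap hab).cycleType, Multiset.card_add, add_comm]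
    rfl
  · set g := swap a b * f
    have hga : g a = b := by simp [g, ha]
    have hgga : g (g a) ≠ a := by
      have hfba : f b ≠ a := fun h => hab (f.injective (ha.trans h.symm))
      rw [hga, mul_apply, swap_apply_of_ne_of_ne hfba hb]
      exact hfba
    have := card_cycleType_swap_mul_eq hgga
    rwa [hga, swap_mul_self_mul, eq_comm] at this

theorem card_support_add_card_fixedPoints (f : Perm α) :
    #f.support + #{x | f x = x} = Fintype.card α := by
  rw [add_comm, ← card_univ]
  exact card_filter_add_card_filter_not _

theorem card_perm_apply_eq_self (x : α) :
    #{f : Perm α | f x = x} = (Fintype.card α - 1)! := by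
  calc #{f : Perm α | f x = x}
      = Fintype.card {f : Perm α // ∀ a, ¬a ≠ x → f a = a} := by
        rw [← Fintype.card_subtype]
        exact Fintype.card_congr (subtypeEquivRight (by simp))
    _ = Fintype.card (Perm {a // a ≠ x}) :=
        (Fintype.card_congr (Equiv.Perm.subtypeEquivSubtypePerm _)).symm
    _ = (Fintype.card α - 1)! := by
        rw [Fintype.card_perm, Fintype.card_subtype_compl, Fintype.card_subtype_eq]

theorem sum_card_fixedPoints [Nonempty α] :
    ∑ f : Perm α, #{x | f x = x} = (Fintype.card α)! := by
  simp only [card_filter]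
  rw [sum_comm]
  simp only [← card_filter, card_perm_apply_eq_self, sum_const, card_univ, smul_eq_mul]
  exact Nat.mul_factorial_pred Fintype.card_ne_zero

theorem sum_card_support_add_factorial [Nonempty α] :
    ∑ f : Perm α, #f.support + (Fintype.card α)! = Fintype.card α * (Fintype.card α)! := by
  nth_rw 1 [← sum_card_fixedPoints]
  rw [← sum_add_distrib]
  simp only [card_support_add_card_fixedPoints, sum_const, card_univ, Fintype.card_perm, smul_eq_mul]
  ring

theorem decomposeFin_symm_eq_swap_mul {n : ℕ} (p : Fin (n + 1)) (e : Perm (Fin n)) :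
    decomposeFin.symm (p, e) = swap 0 p * decomposeFin.symm (0, e) := by
  ext x
  cases x using Fin.cases <;> simp

theorem decomposeFin_symm_zero {n : ℕ} (e : Perm (Fin n)) :
    decomposeFin.symm (0, e) = e.extendDomain (finSuccAboveEquiv 0) := by
  ext x
  cases x using Fin.cases with
  | zero => simp [extendDomain_apply_not_subtype]
  | succ i =>
    have : (i.succ : Fin (n + 1)) = finSuccAboveEquiv 0 i := by simp [finSuccAboveEquiv]
    rw [this, extendDomain_apply_image]
    simp [finSuccAboveEquiv]

theorem cycleType_decomposeFin_symm_zero {n : ℕ} (e : Perm (Fin n)) :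
    (decomposeFin.symm (0, e)).cycleType = e.cycleType := by
  rw [decomposeFin_symm_zero, cycleType_extendDomain]

theorem card_cycleType_decomposeFin_symm_succ {n : ℕ} (q : Fin n) (e : Perm (Fin n)) :
    Multiset.card (decomposeFin.symm (q.succ, e)).cycleType =
      Multiset.card e.cycleType + if e q = q then 1 else 0 := by
  rw [decomposeFin_symm_eq_swap_mul, card_cycleType_swap_mul_of_apply_self (by simp)
    (Fin.succ_ne_zero q).symm, cycleType_decomposeFin_symm_zero]
  simp

theorem sum_card_cycleType_fin_succ (n : ℕ) :
    ∑ π : Perm (Fin (n + 1)), Multiset.card π.cycleType =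
      (n + 1) * ∑ e : Perm (Fin n), Multiset.card e.cycleType +
        ∑ e : Perm (Fin n), #{x | e x = x} := by
  rw [← decomposeFin.symm.sum_comp, Fintype.sum_prod_type, Fin.sum_univ_succ]
  simp only [cycleType_decomposeFin_symm_zero, card_cycleType_decomposeFin_symm_succ,
    sum_add_distrib, card_filter, sum_const, card_univ, Fintype.card_fin, smul_eq_mul]
  rw [sum_comm]
  ring

theorem sum_card_cycleType_fin {n : ℕ} (hn : 1 ≤ n) :
    ∑ π : Perm (Fin n), (Multiset.card π.cycleType : ℚ) = n ! * (harmonic n - 1) := by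
  induction n, hn using Nat.le_induction with
  | base => simp [Subsingleton.elim _ (1 : Perm (Fin 1))]
  | succ n hn ih =>
    have : NeZero n := ⟨by omega⟩
    have hfix := sum_card_fixedPoints (α := Fin n)
    rw [Fintype.card_fin] at hfix
    rw [← Nat.cast_sum, sum_card_cycleType_fin_succ, hfix]
    push_cast
    rw [ih, harmonic_succ, Nat.factorial_succ]
    push_cast
    field_simp
    ring

end Equiv.Perm

/-- The expected minimum number of pick-n-swap operations needed to sort a uniformly
random permutation of `Fin m`, namely the average of
`π.support.card + π.cycleType.card`, equals `m + H_m − 2`, where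
`H_m = Σ_{i=1}^m 1/i` is the m-th harmonic number. -/
theorem expected_min_pick_n_swaps (m : ℕ) (hm : 1 ≤ m) :
    (1 / (Nat.factorial m : ℝ)) *
      ∑ π : Equiv.Perm (Fin m),
        ((π.support.card : ℝ) + (Multiset.card π.cycleType : ℝ)) =
      (m : ℝ) + (∑ i ∈ Finset.range m, (1 : ℝ) / (i + 1)) - 2 := by
  have : NeZero m := ⟨by omega⟩
  have hsupp : ∑ π : Perm (Fin m), (#π.support : ℝ) + m ! = m * m ! := by
    exact_mod_cast Fintype.card_fin m ▸ sum_card_support_add_factorial (α := Fin m)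
  have hcyc : ∑ π : Perm (Fin m), (Multiset.card π.cycleType : ℝ) =
      m ! * ((∑ i ∈ range m, (1 : ℝ) / (i + 1)) - 1) := by
    have := congrArg (Rat.cast : ℚ → ℝ) (sum_card_cycleType_fin hm)
    push_cast [harmonic] at this
    simpa using this
  rw [sum_add_distrib, hcyc]
  field_simp
  linarith
end

section
/- Fix m ≥ 1, k ≥ 1 and type assignments s, g : Fin m → Fin k such that for every type t : Fin k the number of cells i with s i = t equals the number of cells i with g i = t. Then the minimum of Σ_{i : Fin m} |(σ i : ℕ) − (i : ℕ)| over all permutations σ of Fin m satisfying g (σ i) = s i for all i equals Σ_{j=0}^{m−1} Σ_{t : Fin k} |#{i : (i : ℕ) ≤ j ∧ s i = t} − #{i : (i : ℕ) ≤ j ∧ g i = t}|, the total prefix-count discrepancy between the initial and goal type arrangements. -/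
/-!
Count the displacement of a permutation `σ` cut by cut: `|σ i - i|` is the number of cuts
`j < m` (between positions `j` and `j + 1`) that separate `i` from `σ i`. At a cut `j`, the items
of type `t` ending up left of the cut form a set `L_σ` whose size is the goal's prefix count,
while those starting left of it form `L_id`, of the initial prefix count. The items of type `t`
crossing the cut are exactly `L_id ∆ L_σ`, and `|#L_id - #L_σ| ≤ #(L_id ∆ L_σ)`, which gives
the lower bound. Equality holds when one set contains the other, i.e. when no two items of the
same type cross the cut in opposite directions; the permutation that matches the items of each
type to the goal cells of that type in increasing order has this property at every cut.
-/

/-- `prefCount f j t`: the number of cells `i` with position `(i : ℕ) ≤ j` whose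
type under `f` is `t`, as an integer. -/
def prefCount {m k : ℕ} (f : Fin m → Fin k) (j : ℕ) (t : Fin k) : ℤ :=
  ((Finset.univ.filter (fun i : Fin m => (i : ℕ) ≤ j ∧ f i = t)).card : ℤ)

open Finset
open scoped symmDiff

namespace Finset

variable {α : Type*} [DecidableEq α] (A B : Finset α)

theorem card_symmDiff_eq_card_sdiff_add_card_sdiff :
    #(A ∆ B) = #(A \ B) + #(B \ A) := by
  rw [symmDiff_def, sup_eq_union, card_union_of_disjoint disjoint_sdiff_sdiff]

theorem abs_card_sub_card_le_card_symmDiff : |(#A : ℤ) - #B| ≤ #(A ∆ B) := by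
  have hA := card_sdiff_add_card_inter A B
  have hB := card_sdiff_add_card_inter B A
  rw [inter_comm] at hB
  rw [card_symmDiff_eq_card_sdiff_add_card_sdiff, abs_le]
  constructor <;> push_cast <;> omega

variable {A B} in
theorem abs_card_sub_card_eq_card_symmDiff (h : A ⊆ B ∨ B ⊆ A) :
    |(#A : ℤ) - #B| = #(A ∆ B) := by
  have hA := card_sdiff_add_card_inter A B
  have hB := card_sdiff_add_card_inter B A
  rw [inter_comm] at hB
  rw [card_symmDiff_eq_card_sdiff_add_card_sdiff]
  rcases h with h | h
  · rw [sdiff_eq_empty_iff_subset.mpr h, card_empty] at hA ⊢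
    rw [abs_of_nonpos] <;> push_cast <;> omega
  · rw [sdiff_eq_empty_iff_subset.mpr h, card_empty] at hB ⊢
    rw [abs_of_nonneg] <;> push_cast <;> omega

end Finset

theorem abs_natCast_sub_eq_card_filter_range {m a b : ℕ} (ha : a < m) (hb : b < m) :
    |(a : ℤ) - b| = #{j ∈ range m | ¬(a ≤ j ↔ b ≤ j)} := by
  have hcuts : {j ∈ range m | ¬(a ≤ j ↔ b ≤ j)} = Ico (min a b) (max a b) := by
    ext j
    simp only [mem_filter, mem_range, mem_Ico]
    omega
  rw [hcuts, Nat.card_Ico, Nat.cast_sub min_le_max, Nat.cast_max, Nat.cast_min,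
    max_sub_min_eq_abs']

theorem exists_perm_comp_eq_strictMono_on_fibers {α β : Type*} [Fintype α] [LinearOrder α]
    [DecidableEq β] (s g : α → β) (hcount : ∀ t, #{i | s i = t} = #{i | g i = t}) :
    ∃ σ : Equiv.Perm α, (∀ i, g (σ i) = s i) ∧ ∀ i i', s i = s i' → i < i' → σ i < σ i' := by
  let e : ∀ t, {i // s i = t} ≃o {i // g i = t} := fun t =>
    (Fintype.orderIsoFinOfCardEq _ (Fintype.card_subtype _)).symm.trans
      (Fintype.orderIsoFinOfCardEq _ ((Fintype.card_subtype _).trans (hcount t).symm))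
  let σ : Equiv.Perm α := Equiv.ofFiberEquiv fun t => (e t).toEquiv
  have hσ_apply : ∀ t i (hi : s i = t), σ i = e t ⟨i, hi⟩ := by
    rintro t i rfl
    rfl
  refine ⟨σ, Equiv.ofFiberEquiv_map _, fun i i' hii' hlt => ?_⟩
  rw [hσ_apply (s i) i rfl, hσ_apply (s i) i' hii'.symm]
  exact (e (s i)).strictMono hlt

section Cuts

variable {m k : ℕ}

def leftOfCut (s : Fin m → Fin k) (σ : Fin m → Fin m) (j : ℕ) (t : Fin k) : Finset (Fin m) :=
  {i | (σ i : ℕ) ≤ j ∧ s i = t}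

theorem prefCount_eq_card_leftOfCut_id (s : Fin m → Fin k) (j : ℕ) (t : Fin k) :
    prefCount s j t = #(leftOfCut s id j t) :=
  rfl

theorem prefCount_eq_card_leftOfCut {s g : Fin m → Fin k} {σ : Equiv.Perm (Fin m)}
    (hσ : ∀ i, g (σ i) = s i) (j : ℕ) (t : Fin k) :
    prefCount g j t = #(leftOfCut s σ j t) := by
  rw [prefCount, leftOfCut]
  exact congrArg _ (card_equiv σ.symm fun i => by simp [← hσ])

theorem sum_abs_sub_eq_sum_card_symmDiff_leftOfCut (s : Fin m → Fin k) (σ : Fin m → Fin m) :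
    ∑ i, |((σ i : ℕ) : ℤ) - (i : ℕ)| =
      ∑ j ∈ range m, ∑ t, (#(leftOfCut s id j t ∆ leftOfCut s σ j t) : ℤ) := by
  calc ∑ i, |((σ i : ℕ) : ℤ) - (i : ℕ)|
      = ∑ i, (#{j ∈ range m | ¬((σ i : ℕ) ≤ j ↔ (i : ℕ) ≤ j)} : ℤ) :=
        sum_congr rfl fun i _ => abs_natCast_sub_eq_card_filter_range (σ i).isLt i.isLt
    _ = ∑ j ∈ range m, (#{i | ¬((σ i : ℕ) ≤ j ↔ (i : ℕ) ≤ j)} : ℤ) := by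
        exact_mod_cast sum_card_bipartiteAbove_eq_sum_card_bipartiteBelow
          (fun (i : Fin m) (j : ℕ) => ¬((σ i : ℕ) ≤ j ↔ (i : ℕ) ≤ j))
    _ = ∑ j ∈ range m, ∑ t, (#(leftOfCut s id j t ∆ leftOfCut s σ j t) : ℤ) := by
        refine sum_congr rfl fun j _ => ?_
        rw [card_eq_sum_card_fiberwise (f := s) (t := univ) fun _ _ => mem_coe.2 (mem_univ _)]
        push_cast
        refine sum_congr rfl fun t _ => congrArg _ (congrArg _ ?_)
        ext i
        simp only [leftOfCut, mem_filter, mem_univ, true_and, mem_symmDiff, id]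
        tauto

theorem leftOfCut_subset_or_of_strictMono_on_fibers {s : Fin m → Fin k} {σ : Fin m → Fin m}
    (hmono : ∀ i i', s i = s i' → i < i' → σ i < σ i') (j : ℕ) (t : Fin k) :
    leftOfCut s id j t ⊆ leftOfCut s σ j t ∨ leftOfCut s σ j t ⊆ leftOfCut s id j t := by
  by_contra! h
  obtain ⟨i, hi, hσi⟩ := not_subset.1 h.1
  obtain ⟨i', hσi', hi'⟩ := not_subset.1 h.2
  simp only [leftOfCut, mem_filter, mem_univ, true_and, id, not_and] at hi hσi hσi' hi'
  have hj_lt_σi : j < (σ i : ℕ) := not_le.1 fun h => hσi h hi.2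
  have hj_lt_i' : j < (i' : ℕ) := not_le.1 fun h => hi' h hσi'.2
  have := hmono i i' (hi.2.trans hσi'.2.symm) (Fin.lt_def.2 (by omega))
  exact absurd (Fin.lt_def.1 this) (by omega)

end Cuts

theorem min_typed_displacement_general {m k : ℕ}
    (s g : Fin m → Fin k)
    (hcount : ∀ t : Fin k,
      (Finset.univ.filter (fun i : Fin m => s i = t)).card =
      (Finset.univ.filter (fun i : Fin m => g i = t)).card) :
    IsLeast {d : ℤ | ∃ σ : Equiv.Perm (Fin m), (∀ i, g (σ i) = s i) ∧
        (∑ i : Fin m, |((σ i : ℕ) : ℤ) - ((i : ℕ) : ℤ)|) = d}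
      (∑ j ∈ Finset.range m, ∑ t : Fin k, |prefCount s j t - prefCount g j t|) := by
  obtain ⟨σ₀, hσ₀, hmono⟩ := exists_perm_comp_eq_strictMono_on_fibers s g hcount
  refine ⟨⟨σ₀, hσ₀, ?_⟩, ?_⟩
  · rw [sum_abs_sub_eq_sum_card_symmDiff_leftOfCut s σ₀]
    refine sum_congr rfl fun j _ => sum_congr rfl fun t _ => ?_
    rw [prefCount_eq_card_leftOfCut_id, prefCount_eq_card_leftOfCut hσ₀,
      abs_card_sub_card_eq_card_symmDiff (leftOfCut_subset_or_of_strictMono_on_fibers hmono j t)]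
  · rintro d ⟨σ, hσ, rfl⟩
    rw [sum_abs_sub_eq_sum_card_symmDiff_leftOfCut s σ]
    gcongr with j _ t
    rw [prefCount_eq_card_leftOfCut_id, prefCount_eq_card_leftOfCut hσ]
    exact abs_card_sub_card_le_card_symmDiff _ _

/-- For type assignments `s` (initial) and `g` (goal) with equal counts for every
type, the minimum total displacement `Σ_i |σ i − i|` over all permutations `σ`
consistent with the types (`g (σ i) = s i`) equals the total prefix-count
discrepancy `Σ_{j<m} Σ_t |#{i ≤ j, s i = t} − #{i ≤ j, g i = t}|`. -/
theorem min_typed_displacement {m k : ℕ} (hm : 1 ≤ m) (hk : 1 ≤ k)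
    (s g : Fin m → Fin k)
    (hcount : ∀ t : Fin k,
      (Finset.univ.filter (fun i : Fin m => s i = t)).card =
      (Finset.univ.filter (fun i : Fin m => g i = t)).card) :
    IsLeast {d : ℤ | ∃ σ : Equiv.Perm (Fin m), (∀ i, g (σ i) = s i) ∧
        (∑ i : Fin m, |((σ i : ℕ) : ℤ) - ((i : ℕ) : ℤ)|) = d}
      (∑ j ∈ Finset.range m, ∑ t : Fin k, |prefCount s j t - prefCount g j t|) :=
  min_typed_displacement_general s g hcount
end

section
/- Fix m ≥ 1, k ≥ 1 and type assignments s, g : Fin m → Fin k with equal counts for every type. In the partially-labeled pick-n-swap model with initial typed arrangement s and goal typed arrangement g, the minimum number of pick-n-swap operations over all valid plans equals the minimum, over all permutations σ of Fin m satisfying g (σ i) = s i for all i, of σ.support.card + σ.cycleType.card. -/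
/-- A plan is valid for the partially-labeled instance with initial typed
arrangement `s` and goal typed arrangement `g` if executing it transforms the
initial state into the goal state. -/
def ValidPlanTyped {m k : ℕ} (s g : Fin m → Fin k) (plan : List (Fin m)) : Prop :=
  pnsExec (fun i => some (s i), none) plan = (fun i => some (g i), none)

/-!
Let the hand be an extra cell `none`. A pick-n-swap at `ℓ` exchanges the contents of `none` and
`some ℓ`, so executing a plan composes the state with a product of transpositions `(none, some ℓ)`,
and the plan is valid exactly when this product fixes `none` and restricts to `σ⁻¹` for some `σ`
with `g ∘ σ = s`. An `r`-cycle is a product of `r + 1` such transpositions (pick up an item, walk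
around the cycle, put it down), which gives the upper bound. Conversely every cell moved by `σ`
must be visited, and in each cycle the cell visited first must be visited again: at that first
visit the hand holds no item of the cycle, since none of its cells has been visited yet.
-/

open Equiv Equiv.Perm Finset

theorem Equiv.optionCongr_mul {α : Type*} (σ τ : Perm α) :
    (σ * τ).optionCongr = σ.optionCongr * τ.optionCongr :=
  optionCongr_trans τ σ

theorem exists_perm_apply_eq_of_card_filter_eq {α β : Type*} [Fintype α] [DecidableEq β]
    {s g : α → β} (h : ∀ t, #{i | s i = t} = #{i | g i = t}) :
    ∃ σ : Perm α, ∀ i, g (σ i) = s i :=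
  ⟨ofFiberEquiv fun t => Fintype.equivOfCardEq (by simpa [Fintype.card_subtype] using h t),
    ofFiberEquiv_map _⟩

theorem Nat.isLeast_sInf_of_subset_of_forall_exists_le {S T : Set ℕ} (hT : T.Nonempty)
    (hTS : T ⊆ S) (hST : ∀ N ∈ S, ∃ n ∈ T, n ≤ N) : IsLeast S (sInf T) :=
  ⟨hTS (Nat.sInf_mem hT), fun N hN =>
    let ⟨_, hn, hle⟩ := hST N hN
    (Nat.sInf_le hn).trans hle⟩

variable {α β : Type*} [DecidableEq α]

theorem Equiv.swap_mul_prod_map_swap_mul_swap {x y : α} {l : List α} (hx : x ∉ l) (hy : y ∉ l) :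
    swap x y * (l.map (swap x)).prod * swap x y = (l.map (swap y)).prod := by
  induction l with
  | nil => simp [swap_mul_self]
  | cons z l ih =>
    simp only [List.mem_cons, not_or] at hx hy
    have hconj : swap x y * swap x z * swap x y = swap y z := by
      rw [swap_comm x z, swap_mul_swap_mul_swap (Ne.symm hx.1) (Ne.symm hy.1)]
    calc swap x y * (swap x z :: l.map (swap x)).prod * swap x y
        = (swap x y * swap x z * swap x y) * (swap x y * (l.map (swap x)).prod * swap x y) := by
          simp only [List.prod_cons, mul_assoc, swap_mul_self_mul]
      _ = (swap y z :: l.map (swap y)).prod := by rw [hconj, ih hx.2 hy.2, List.prod_cons]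

theorem List.prod_map_swap_eq_formPerm_inv {x : α} {l : List α} (h : (x :: l).Nodup) :
    (l.map (Equiv.swap x)).prod = (formPerm (x :: l))⁻¹ := by
  induction l generalizing x with
  | nil => simp
  | cons y l ih =>
    have hx : x ∉ y :: l := (List.nodup_cons.mp h).1
    have hy : (y :: l).Nodup := (List.nodup_cons.mp h).2
    simp only [List.mem_cons, not_or] at hx
    rw [formPerm_cons_cons, mul_inv_rev, ← ih hy, Equiv.swap_inv,
      ← Equiv.swap_mul_prod_map_swap_mul_swap hx.2 (List.nodup_cons.mp hy).1,
      mul_assoc _ _ (Equiv.swap x y), Equiv.swap_mul_self, mul_one, List.map_cons, List.prod_cons]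

theorem Equiv.optionCongr_prod_map_swap (x : α) (l : List α) :
    ((l.map (swap x)).prod).optionCongr = ((l.map some).map (swap (some x))).prod := by
  induction l with
  | nil => simp
  | cons z l ih => simp [optionCongr_mul, ih, optionCongr_swap]

def pnsPerm (p : List α) : Perm (Option α) :=
  (p.map fun ℓ => swap none (some ℓ)).prod

@[simp]
theorem pnsPerm_nil : pnsPerm ([] : List α) = 1 := rfl

@[simp]
theorem pnsPerm_cons (ℓ : α) (p : List α) :
    pnsPerm (ℓ :: p) = swap none (some ℓ) * pnsPerm p := List.prod_cons

@[simp]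
theorem pnsPerm_append (p q : List α) : pnsPerm (p ++ q) = pnsPerm p * pnsPerm q := by
  simp [pnsPerm]

theorem pnsPerm_apply_some_of_notMem {p : List α} {i : α} (h : i ∉ p) :
    pnsPerm p (some i) = some i := by
  induction p with
  | nil => rfl
  | cons ℓ p ih =>
    simp only [List.mem_cons, not_or] at h
    rw [pnsPerm_cons, mul_apply, ih h.2,
      swap_apply_of_ne_of_ne (Option.some_ne_none i) (Option.some_injective _ |>.ne h.1)]

theorem elim_pnsStep (st : (α → Option β) × Option β) (ℓ : α) (o : Option α) :
    o.elim (pnsStep st ℓ).2 (pnsStep st ℓ).1 = (swap none (some ℓ) o).elim st.2 st.1 := by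
  rcases o with _ | i
  · simp [pnsStep]
  · by_cases h : i = ℓ
    · simp [pnsStep, h]
    · simp [pnsStep, h, swap_apply_of_ne_of_ne]

theorem elim_pnsExec (st : (α → Option β) × Option β) (p : List α) (o : Option α) :
    o.elim (pnsExec st p).2 (pnsExec st p).1 = (pnsPerm p o).elim st.2 st.1 := by
  induction p generalizing st o with
  | nil => rfl
  | cons ℓ p ih =>
    rw [pnsExec, List.foldl_cons, ← pnsExec, ih, elim_pnsStep, pnsPerm_cons, mul_apply]

theorem pnsExec_eq_iff {s g : α → β} {p : List α} :
    pnsExec (fun i => some (s i), none) p = (fun i => some (g i), none) ↔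
      ∃ σ : Perm α, (∀ i, g (σ i) = s i) ∧ pnsPerm p = σ⁻¹.optionCongr := by
  have key (o : Option α) :
      o.elim (pnsExec (fun i => some (s i), none) p).2 (pnsExec (fun i => some (s i), none) p).1 =
        (pnsPerm p o).map s := by
    rw [elim_pnsExec]; cases pnsPerm p o <;> rfl
  constructor
  · intro h
    have hmap (o : Option α) : (pnsPerm p o).map s = o.map g := by
      rw [← key, h]; cases o <;> rfl
    have hnone : pnsPerm p none = none := Option.map_eq_none_iff.mp (hmap none)
    obtain ⟨π, hπ⟩ : ∃ π : Perm α, pnsPerm p = π.optionCongr := ⟨removeNone (pnsPerm p), by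
      rw [map_equiv_removeNone, hnone, swap_self, ← Perm.one_def, one_mul]⟩
    refine ⟨π⁻¹, fun i => ?_, by rw [inv_inv, hπ]⟩
    simpa [hπ] using (hmap (some (π⁻¹ i))).symm
  · rintro ⟨σ, hσ, hp⟩
    refine Prod.ext (funext fun i => ?_) ?_
    · simpa [hp, ← hσ] using key (some i)
    · simpa [hp] using key none

section LowerBound
variable [Fintype α] {p : List α} {σ : Perm α}

theorem mem_of_mem_support_of_pnsPerm_eq (h : pnsPerm p = σ.optionCongr) {i : α}
    (hi : i ∈ σ.support) : i ∈ p := by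
  by_contra hp
  have := pnsPerm_apply_some_of_notMem hp
  rw [h, optionCongr_apply, Option.map_some, Option.some_inj] at this
  exact mem_support.mp hi this

theorem exists_two_le_count_of_pnsPerm_eq (h : pnsPerm p = σ.optionCongr) {c : Perm α}
    (hc : c ∈ σ.cycleFactorsFinset) : ∃ ℓ ∈ c.support, 2 ≤ p.count ℓ := by
  obtain ⟨x, hx⟩ := (mem_cycleFactorsFinset_iff.mp hc).1.nonempty_support
  have hxp : x ∈ p := mem_of_mem_support_of_pnsPerm_eq h (mem_cycleFactorsFinset_support_le hc hx)
  obtain ⟨ℓ, hfind⟩ := Option.isSome_iff_exists.mp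
    (List.find?_isSome.mpr ⟨x, hxp, decide_eq_true hx⟩ : (p.find? (· ∈ c.support)).isSome)
  obtain ⟨hℓ, pre, post, rfl, hpre⟩ := List.find?_eq_some_iff_append.mp hfind
  rw [decide_eq_true_iff] at hℓ
  refine ⟨ℓ, hℓ, ?_⟩
  have hpost : ℓ ∈ post := by
    by_contra hpost
    have hcℓ : c ℓ ∈ c.support := apply_mem_support.mpr hℓ
    have h1 : pnsPerm (pre ++ ℓ :: post) (some ℓ) = pnsPerm pre none := by
      simp [pnsPerm_apply_some_of_notMem hpost]
    have h2 : pnsPerm pre (some (c ℓ)) = some (c ℓ) :=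
      pnsPerm_apply_some_of_notMem fun hm => by simpa [hcℓ] using hpre _ hm
    rw [h, optionCongr_apply, Option.map_some, ← (mem_cycleFactorsFinset_iff.mp hc).2 ℓ hℓ,
      ← h2] at h1
    exact Option.some_ne_none _ ((pnsPerm pre).injective h1)
  have := List.count_pos_iff.mpr hpost
  rw [List.count_append, List.count_cons_self]
  omega

theorem card_support_add_one_le_sum_count_of_pnsPerm_eq (h : pnsPerm p = σ.optionCongr)
    {c : Perm α} (hc : c ∈ σ.cycleFactorsFinset) :
    #c.support + 1 ≤ ∑ i ∈ c.support, p.count i := by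
  obtain ⟨ℓ, hℓ, hcount⟩ := exists_two_le_count_of_pnsPerm_eq h hc
  calc #c.support + 1 = ∑ i ∈ c.support, (1 + if i = ℓ then 1 else 0) := by
        simp [sum_add_distrib, hℓ]
    _ ≤ ∑ i ∈ c.support, p.count i := sum_le_sum fun i hi => by
        have := List.count_pos_iff.mpr
          (mem_of_mem_support_of_pnsPerm_eq h (mem_cycleFactorsFinset_support_le hc hi))
        split_ifs with hiℓ
        · exact hiℓ ▸ hcount
        · omega

theorem card_support_add_card_cycleType_le_length (h : pnsPerm p = σ.optionCongr) :
    #σ.support + σ.cycleType.card ≤ p.length :=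
  calc #σ.support + σ.cycleType.card = ∑ c ∈ σ.cycleFactorsFinset, (#c.support + 1) := by
        rw [sum_add_distrib, ← sum_cycleType, cycleType_def]
        simp
    _ ≤ ∑ c ∈ σ.cycleFactorsFinset, ∑ i ∈ c.support, p.count i :=
        sum_le_sum fun c hc => card_support_add_one_le_sum_count_of_pnsPerm_eq h hc
    _ = ∑ i ∈ σ.cycleFactorsFinset.biUnion support, p.count i :=
        (sum_biUnion fun c hc d hd hcd =>
          (cycleFactorsFinset_pairwise_disjoint σ hc hd hcd).disjoint_support).symm
    _ ≤ ∑ i, p.count i := sum_le_sum_of_subset (subset_univ _)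
    _ = p.length := by simpa using Multiset.sum_count_eq_card (s := univ) (m := (p : Multiset α))

end LowerBound

theorem pnsPerm_cons_append_singleton {x : α} {l : List α} (hx : x ∉ l) :
    pnsPerm (x :: l ++ [x]) = ((l.map (swap x)).prod).optionCongr := by
  rw [optionCongr_prod_map_swap, ← swap_mul_prod_map_swap_mul_swap (x := none) (by simp)
    (by simpa using hx)]
  simp [pnsPerm, mul_assoc, Function.comp_def]

section UpperBound
variable [Fintype α]

theorem Equiv.Perm.IsCycle.exists_pnsPerm_eq_inv {c : Perm α} (hc : c.IsCycle) :
    ∃ p : List α, pnsPerm p = c⁻¹.optionCongr ∧ p.length = #c.support + 1 := by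
  obtain ⟨x, hx⟩ := hc.nonempty_support
  have hcx : c.cycleOf x = c := hc.cycleOf_eq (mem_support.mp hx)
  obtain ⟨l, hl⟩ : ∃ l, toList c x = x :: l := by
    obtain ⟨n, hn⟩ := Nat.exists_eq_add_of_lt (length_toList_pos_of_mem_support _ _ hx)
    rw [Perm.length_toList] at hn
    exact ⟨_, by rw [Perm.toList, hn]; rfl⟩
  have hnodup : (x :: l).Nodup := hl ▸ nodup_toList c x
  refine ⟨x :: l ++ [x], ?_, ?_⟩
  · rw [pnsPerm_cons_append_singleton (List.nodup_cons.mp hnodup).1,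
      List.prod_map_swap_eq_formPerm_inv hnodup, ← hl, formPerm_toList, hcx]
  · have := Perm.length_toList c x
    rw [hl, hcx, List.length_cons] at this
    rw [List.length_append, List.length_cons, this, List.length_singleton]

theorem exists_pnsPerm_eq (σ : Perm α) :
    ∃ p : List α, pnsPerm p = σ.optionCongr ∧ p.length = #σ.support + σ.cycleType.card := by
  induction σ using cycle_induction_on with
  | base_one => exact ⟨[], by simp⟩
  | base_cycles c hc =>
    obtain ⟨p, hp, hlen⟩ := hc.inv.exists_pnsPerm_eq_inv
    refine ⟨p, by rw [hp, inv_inv], ?_⟩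
    rw [hlen, support_inv, hc.cycleType]
    rfl
  | induction_disjoint σ τ hd _ hσ hτ =>
    obtain ⟨p, hp, hplen⟩ := hσ
    obtain ⟨q, hq, hqlen⟩ := hτ
    refine ⟨p ++ q, by rw [pnsPerm_append, hp, hq, optionCongr_mul], ?_⟩
    rw [List.length_append, hplen, hqlen, hd.card_support_mul, hd.cycleType_mul,
      Multiset.card_add, add_add_add_comm]

end UpperBound

theorem min_pick_n_swaps_typed_general {m k : ℕ}
    (s g : Fin m → Fin k)
    (hcount : ∀ t : Fin k,
      (Finset.univ.filter (fun i : Fin m => s i = t)).card =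
      (Finset.univ.filter (fun i : Fin m => g i = t)).card) :
    IsLeast {N : ℕ | ∃ plan : List (Fin m), ValidPlanTyped s g plan ∧ plan.length = N}
      (sInf {n : ℕ | ∃ σ : Equiv.Perm (Fin m), (∀ i, g (σ i) = s i) ∧
        n = σ.support.card + Multiset.card σ.cycleType}) := by
  obtain ⟨σ₀, hσ₀⟩ := exists_perm_apply_eq_of_card_filter_eq hcount
  refine Nat.isLeast_sInf_of_subset_of_forall_exists_le ⟨_, σ₀, hσ₀, rfl⟩ ?_ ?_
  · rintro _ ⟨σ, hσ, rfl⟩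
    obtain ⟨p, hp, hlen⟩ := exists_pnsPerm_eq σ⁻¹
    exact ⟨p, pnsExec_eq_iff.mpr ⟨σ, hσ, hp⟩, by rw [hlen, support_inv, cycleType_inv]⟩
  · rintro _ ⟨p, hp, rfl⟩
    obtain ⟨σ, hσ, hp⟩ := pnsExec_eq_iff.mp hp
    refine ⟨_, ⟨σ, hσ, rfl⟩, ?_⟩
    simpa only [support_inv, cycleType_inv] using card_support_add_card_cycleType_le_length hp

/-- In the partially-labeled pick-n-swap model, the minimum number of pick-n-swap
operations over all valid plans equals the minimum, over all type-consistent
permutations `σ` (those with `g (σ i) = s i` for all `i`), of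
`σ.support.card + σ.cycleType.card`. -/
theorem min_pick_n_swaps_typed {m k : ℕ} (hm : 1 ≤ m) (hk : 1 ≤ k)
    (s g : Fin m → Fin k)
    (hcount : ∀ t : Fin k,
      (Finset.univ.filter (fun i : Fin m => s i = t)).card =
      (Finset.univ.filter (fun i : Fin m => g i = t)).card) :
    IsLeast {N : ℕ | ∃ plan : List (Fin m), ValidPlanTyped s g plan ∧ plan.length = N}
      (sInf {n : ℕ | ∃ σ : Equiv.Perm (Fin m), (∀ i, g (σ i) = s i) ∧
        n = σ.support.card + Multiset.card σ.cycleType}) :=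
  min_pick_n_swaps_typed_general s g hcount
end

section
/- Fix m ≥ 1, k ≥ 1 and type assignments s, g : Fin m → Fin k with equal counts for every type. In the partially-labeled one-dimensional pick-n-swap model, every valid plan transforming the typed arrangement s into the typed arrangement g has total end-effector travel at least Σ_{j=0}^{m−1} Σ_{t : Fin k} |#{i : (i : ℕ) ≤ j ∧ s i = t} − #{i : (i : ℕ) ≤ j ∧ g i = t}|. -/
/-!
Fix the cut between positions `j` and `j + 1` and count, for each type `t`, the items of type `t`
left of the cut, where the held item counts as lying wherever the hand is. A pick-n-swap leaves
these counts unchanged, since it only exchanges the held item with the item under the hand. A hand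
move changes them, summed over all types, by at most one, and only if it crosses the cut. So the
discrepancy at cut `j` between `s` and `g` is at most the number of crossings of cut `j`, and
summing over all cuts gives the travel, as a move `p → q` crosses exactly `|p - q|` cuts.
-/

open Finset

/-- The cost of the hand path `p → plan₁ → ⋯ → planₙ → q` when each move `x → y` costs `c x y`. -/
def pathCost {γ : Type*} (c : γ → γ → ℤ) (p : γ) (plan : List γ) (q : γ) : ℤ :=
  (((p :: plan).zip (plan ++ [q])).map fun xy => c xy.1 xy.2).sum

section PathCost

variable {γ : Type*} (c : γ → γ → ℤ)

@[simp]
lemma pathCost_nil (p q : γ) : pathCost c p [] q = c p q := by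
  simp [pathCost]

@[simp]
lemma pathCost_cons (p ℓ : γ) (l : List γ) (q : γ) :
    pathCost c p (ℓ :: l) q = c p ℓ + pathCost c ℓ l q := by
  simp [pathCost]

lemma sum_pathCost {ι : Type*} (s : Finset ι) (c : ι → γ → γ → ℤ) (p : γ) (l : List γ) (q : γ) :
    ∑ j ∈ s, pathCost (c j) p l q = pathCost (fun x y => ∑ j ∈ s, c j x y) p l q := by
  induction l generalizing p with
  | nil => simp
  | cons ℓ l ih => simp [sum_add_distrib, ih]

end PathCost

def crossing {γ : Type*} (L : γ → Prop) [DecidablePred L] (p q : γ) : ℤ :=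
  if (L p ↔ L q) then 0 else 1

lemma crossing_comm {γ : Type*} (L : γ → Prop) [DecidablePred L] (p q : γ) :
    crossing L p q = crossing L q p := by
  simp only [crossing, Iff.comm]

lemma sum_range_crossing_le_eq_abs_sub {n p q : ℕ} (hp : p ≤ n) (hq : q ≤ n) :
    ∑ j ∈ range n, crossing (· ≤ j) p q = |(p : ℤ) - q| := by
  wlog hpq : p ≤ q generalizing p q
  · simpa only [crossing_comm, abs_sub_comm] using this hq hp (by omega)
  have hcut : ∀ j ∈ range n, crossing (· ≤ j) p q = if j ∈ Ico p q then 1 else 0 := by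
    intro j _
    simp only [crossing, mem_Ico]
    split_ifs <;> omega
  rw [sum_congr rfl hcut, sum_ite_mem, sum_const, nsmul_one,
    inter_eq_right.mpr fun j hj => by simp only [mem_Ico, mem_range] at *; omega, Nat.card_Ico,
    abs_of_nonpos (by omega)]
  omega

lemma sum_range_crossing_fin_eq_abs_sub {m : ℕ} (p q : Fin m) :
    ∑ j ∈ range m, crossing (fun i : Fin m => (i : ℕ) ≤ j) p q = |((p : ℕ) : ℤ) - (q : ℕ)| :=
  sum_range_crossing_le_eq_abs_sub p.isLt.le q.isLt.le

section SideLoad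

variable {γ β : Type*} [Fintype γ] [DecidableEq β]
  (L : γ → Prop) [DecidablePred L]

/-- The number of items of type `t` on the side `L`, counting the held item as lying at the
hand's position. -/
def sideLoad (st : (γ → Option β) × Option β) (hand : γ) (t : β) : ℤ :=
  #{i | L i ∧ st.1 i = some t} + if L hand ∧ st.2 = some t then 1 else 0

lemma sideLoad_initial (f : γ → β) (hand : γ) (t : β) :
    sideLoad L (fun i => some (f i), none) hand t = #{i | L i ∧ f i = t} := by
  simp [sideLoad]

lemma sideLoad_pnsStep [DecidableEq γ] (st : (γ → Option β) × Option β) (ℓ : γ) (t : β) :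
    sideLoad L (pnsStep st ℓ) ℓ t = sideLoad L st ℓ t := by
  obtain ⟨a, h⟩ := st
  have hoff : ∀ i ∈ ({ℓ}ᶜ : Finset γ), (if L i ∧ Function.update a ℓ h i = some t then 1 else 0)
      = (if L i ∧ a i = some t then 1 else 0 : ℤ) := fun i hi => by
    rw [Function.update_of_ne (by simpa using hi)]
  dsimp only [sideLoad, pnsStep]
  simp only [card_filter, Nat.cast_sum, Nat.cast_ite, Nat.cast_one, Nat.cast_zero]
  rw [Fintype.sum_eq_add_sum_compl ℓ, Fintype.sum_eq_add_sum_compl ℓ,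
    sum_congr rfl hoff, Function.update_self]
  ring

lemma sum_abs_sideLoad_sub_le_crossing [Fintype β] (st : (γ → Option β) × Option β) (p q : γ) :
    ∑ t, |sideLoad L st q t - sideLoad L st p t| ≤ crossing L p q := by
  simp only [sideLoad, add_sub_add_left_eq_sub]
  rcases st with ⟨a, _ | u⟩
  · simp only [reduceCtorEq, and_false, if_false, sub_self, abs_zero, sum_const_zero, crossing]
    split_ifs <;> norm_num
  · rw [sum_eq_single u (fun t _ ht => by simp [Ne.symm ht]) (by simp)]
    simp only [crossing, and_true]
    split_ifs <;> simp_all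

lemma sum_abs_sideLoad_pnsExec_sub_le_pathCost [DecidableEq γ] [Fintype β]
    (st : (γ → Option β) × Option β) (l : List γ) (p q : γ) :
    ∑ t, |sideLoad L (pnsExec st l) q t - sideLoad L st p t| ≤ pathCost (crossing L) p l q := by
  induction l generalizing st p with
  | nil => simpa [pnsExec] using sum_abs_sideLoad_sub_le_crossing L st p q
  | cons ℓ l ih =>
    have hrest := ih (pnsStep st ℓ) ℓ
    simp only [sideLoad_pnsStep] at hrest
    calc ∑ t, |sideLoad L (pnsExec st (ℓ :: l)) q t - sideLoad L st p t|
        ≤ ∑ t, (|sideLoad L (pnsExec (pnsStep st ℓ) l) q t - sideLoad L st ℓ t|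
            + |sideLoad L st ℓ t - sideLoad L st p t|) :=
          sum_le_sum fun t _ => abs_sub_le _ _ _
      _ ≤ pathCost (crossing L) ℓ l q + crossing L p ℓ := by
          rw [sum_add_distrib]
          exact add_le_add hrest (sum_abs_sideLoad_sub_le_crossing L st p ℓ)
      _ = pathCost (crossing L) p (ℓ :: l) q := by rw [pathCost_cons, add_comm]

end SideLoad

theorem typed_travel_lower_bound_general {m k : ℕ} (hm : 0 < m)
    (s g : Fin m → Fin k)
    (plan : List (Fin m)) (hplan : ValidPlanTyped s g plan) :
    (∑ j ∈ Finset.range m, ∑ t : Fin k, |prefCount s j t - prefCount g j t|) ≤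
      travel1D hm plan := by
  set rest : Fin m := ⟨0, hm⟩
  have hcut : ∀ j, ∑ t, |prefCount s j t - prefCount g j t| ≤
      pathCost (crossing fun i : Fin m => (i : ℕ) ≤ j) rest plan rest := by
    intro j
    have h := sum_abs_sideLoad_pnsExec_sub_le_pathCost (fun i : Fin m => (i : ℕ) ≤ j)
      (fun i => some (s i), none) plan rest rest
    rw [show pnsExec _ plan = _ from hplan] at h
    simpa only [sideLoad_initial, prefCount, abs_sub_comm] using h
  calc _ ≤ ∑ j ∈ range m, pathCost (crossing fun i : Fin m => (i : ℕ) ≤ j) rest plan rest :=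
        sum_le_sum fun j _ => hcut j
    _ = travel1D hm plan := by
        rw [sum_pathCost]
        simp only [sum_range_crossing_fin_eq_abs_sub]
        rfl

/-- In the partially-labeled one-dimensional pick-n-swap model, every valid plan
transforming `s` into `g` has total end-effector travel at least the total
prefix-count discrepancy between `s` and `g`. -/
theorem typed_travel_lower_bound {m k : ℕ} (hm : 0 < m) (hk : 1 ≤ k)
    (s g : Fin m → Fin k)
    (hcount : ∀ t : Fin k,
      (Finset.univ.filter (fun i : Fin m => s i = t)).card =
      (Finset.univ.filter (fun i : Fin m => g i = t)).card)
    (plan : List (Fin m)) (hplan : ValidPlanTyped s g plan) :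
    (∑ j ∈ Finset.range m, ∑ t : Fin k, |prefCount s j t - prefCount g j t|) ≤
      travel1D hm plan :=
  typed_travel_lower_bound_general hm s g plan hplan
end

section
/- Fix m₁, m₂ ≥ 1 and a permutation π of Fin m₁ × Fin m₂. Every valid plan for π in the two-dimensional pick-n-swap model on the m₁ × m₂ lattice has total end-effector travel at least Σ_{q : Fin m₁ × Fin m₂} dist(π⁻¹ q, q), where dist((r,c),(r',c')) = √(((r:ℕ) − (r':ℕ))² + ((c:ℕ) − (c':ℕ))²) is the Euclidean distance between lattice cells. -/
/-- Euclidean distance between two cells of an `m₁ × m₂` lattice. -/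
noncomputable def dist2D {m₁ m₂ : ℕ} (p q : Fin m₁ × Fin m₂) : ℝ :=
  Real.sqrt ((((p.1 : ℕ) : ℝ) - ((q.1 : ℕ) : ℝ)) ^ 2 +
    (((p.2 : ℕ) : ℝ) - ((q.2 : ℕ) : ℝ)) ^ 2)

/-- Total end-effector travel of a 2D plan `p₁, …, p_N`: the sum of
`dist(p_j, p_{j+1})` for `j = 0, …, N`, where `p₀ = p_{N+1} = (0,0)` is the rest
position (the top-left cell). -/
noncomputable def travel2D {m₁ m₂ : ℕ} (h₁ : 0 < m₁) (h₂ : 0 < m₂)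
    (plan : List (Fin m₁ × Fin m₂)) : ℝ :=
  ((((⟨0, h₁⟩, ⟨0, h₂⟩) :: plan).zip (plan ++ [((⟨0, h₁⟩, ⟨0, h₂⟩) : Fin m₁ × Fin m₂)])).map
    (fun pq => dist2D pq.1 pq.2)).sum

/-!
Consider the potential of a state: the total distance of every item from its goal cell, the held
item being measured from the end effector. It is `Σ_q dist(π⁻¹ q, q)` initially and `0` in the
sorted state. Moving from `p` to `ℓ` and swapping at `ℓ` changes only the reference point of the
item carried, from `p` to `ℓ`, so by the triangle inequality the potential drops by at most
`dist(p, ℓ)`. Hence the travel is at least the initial potential.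
-/

lemma pnsExec_cons {α : Type*} [DecidableEq α] (st : (α → Option α) × Option α) (ℓ : α)
    (plan : List α) : pnsExec st (ℓ :: plan) = pnsExec (pnsStep st ℓ) plan :=
  rfl

section PickNSwap

variable {α E : Type*} [PseudoMetricSpace E] (f : α → E)

noncomputable def walkLength (p : α) (l : List α) : ℝ :=
  (((p :: l).zip l).map fun pq => dist (f pq.1) (f pq.2)).sum

@[simp]
lemma walkLength_nil (p : α) : walkLength f p [] = 0 := by
  simp [walkLength]

lemma walkLength_cons (p ℓ : α) (l : List α) :
    walkLength f p (ℓ :: l) = dist (f p) (f ℓ) + walkLength f ℓ l := by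
  simp [walkLength]

lemma walkLength_append_singleton (p q : α) (l : List α) :
    walkLength f p (l ++ [q]) = walkLength f p l + dist (f (l.getLastD p)) (f q) := by
  induction l generalizing p with
  | nil => simp [walkLength_cons]
  | cons ℓ l ih => simp only [List.cons_append, walkLength_cons, ih, List.getLastD_cons, add_assoc]

noncomputable def goalDist (c : α) (o : Option α) : ℝ :=
  o.elim 0 fun q => dist (f c) (f q)

lemma goalDist_le_dist_add (p ℓ : α) (o : Option α) :
    goalDist f p o ≤ dist (f p) (f ℓ) + goalDist f ℓ o := by
  cases o with
  | none => simp [goalDist]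
  | some q => exact dist_triangle _ _ _

variable [Fintype α]

noncomputable def pnsPotential (st : (α → Option α) × Option α) (p : α) : ℝ :=
  ∑ c, goalDist f c (st.1 c) + goalDist f p st.2

lemma pnsPotential_initial (π : Equiv.Perm α) (p : α) :
    pnsPotential f (fun i => some (π i), none) p = ∑ q, dist (f (π⁻¹ q)) (f q) := by
  rw [← Equiv.sum_comp π]
  simp [pnsPotential, goalDist]

lemma pnsPotential_sorted (p : α) : pnsPotential f (fun i => some i, none) p = 0 := by
  simp [pnsPotential, goalDist]

variable [DecidableEq α]

lemma pnsPotential_le_dist_add_pnsStep (st : (α → Option α) × Option α) (p ℓ : α) :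
    pnsPotential f st p ≤ dist (f p) (f ℓ) + pnsPotential f (pnsStep st ℓ) ℓ := by
  obtain ⟨a, h⟩ := st
  have hswap : ∑ c, goalDist f c (Function.update a ℓ h c) + goalDist f ℓ (a ℓ) =
      ∑ c, goalDist f c (a c) + goalDist f ℓ h := by
    simp only [Function.apply_update (fun c => goalDist f c),
      Finset.sum_update_of_mem (Finset.mem_univ ℓ), Fintype.sum_eq_add_sum_compl ℓ,
      Finset.compl_eq_univ_sdiff]
    ring
  have hcarried := goalDist_le_dist_add f p ℓ h
  simp only [pnsPotential, pnsStep]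
  linarith

lemma pnsPotential_le_walkLength_add_pnsExec (st : (α → Option α) × Option α) (p : α)
    (plan : List α) :
    pnsPotential f st p ≤
      walkLength f p plan + pnsPotential f (pnsExec st plan) (plan.getLastD p) := by
  induction plan generalizing st p with
  | nil => simp [pnsExec]
  | cons ℓ plan ih =>
    have hstep := pnsPotential_le_dist_add_pnsStep f st p ℓ
    have hrest := ih (pnsStep st ℓ) ℓ
    rw [walkLength_cons, List.getLastD_cons, pnsExec_cons]
    linarith

theorem sum_dist_le_walkLength_of_validPlan {π : Equiv.Perm α} {plan : List α}
    (hplan : ValidPlan π plan) (o : α) :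
    ∑ q, dist (f (π⁻¹ q)) (f q) ≤ walkLength f o (plan ++ [o]) :=
  calc ∑ q, dist (f (π⁻¹ q)) (f q)
      = pnsPotential f (fun i => some (π i), none) o := (pnsPotential_initial f π o).symm
    _ ≤ walkLength f o plan +
          pnsPotential f (pnsExec (fun i => some (π i), none) plan) (plan.getLastD o) :=
        pnsPotential_le_walkLength_add_pnsExec f _ o plan
    _ = walkLength f o plan := by rw [hplan, pnsPotential_sorted, add_zero]
    _ ≤ walkLength f o (plan ++ [o]) := by
        rw [walkLength_append_singleton]
        exact le_add_of_nonneg_right dist_nonneg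

end PickNSwap

section Lattice

variable {m₁ m₂ : ℕ}

def latticePoint (p : Fin m₁ × Fin m₂) : ℂ :=
  ⟨p.1, p.2⟩

lemma dist2D_eq_dist_latticePoint (p q : Fin m₁ × Fin m₂) :
    dist2D p q = dist (latticePoint p) (latticePoint q) := by
  simp [dist2D, latticePoint, Complex.dist_eq, Complex.norm_def, Complex.normSq_apply, sq]

lemma travel2D_eq_walkLength (h₁ : 0 < m₁) (h₂ : 0 < m₂) (plan : List (Fin m₁ × Fin m₂)) :
    travel2D h₁ h₂ plan =
      walkLength latticePoint (⟨0, h₁⟩, ⟨0, h₂⟩) (plan ++ [(⟨0, h₁⟩, ⟨0, h₂⟩)]) := by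
  -- `zip` truncates, so appending the rest position to the left list changes nothing.
  rw [walkLength, ← List.cons_append, ← List.append_nil (plan ++ _), List.zip_append (by simp)]
  simp [travel2D, dist2D_eq_dist_latticePoint]

end Lattice

/-- Every valid plan for `π` in the two-dimensional pick-n-swap model has total
end-effector travel at least `Σ_q dist(π⁻¹ q, q)`. -/
theorem travel_lower_bound_2D {m₁ m₂ : ℕ} (h₁ : 0 < m₁) (h₂ : 0 < m₂)
    (π : Equiv.Perm (Fin m₁ × Fin m₂)) (plan : List (Fin m₁ × Fin m₂))
    (hplan : ValidPlan π plan) :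
    (∑ q : Fin m₁ × Fin m₂, dist2D (π⁻¹ q) q) ≤ travel2D h₁ h₂ plan := by
  rw [travel2D_eq_walkLength]
  simpa only [dist2D_eq_dist_latticePoint] using
    sum_dist_le_walkLength_of_validPlan latticePoint hplan _
end

section
/- Fix m₁, m₂ ≥ 1 and a permutation π of Fin m₁ × Fin m₂. There exists a valid plan for π in the two-dimensional pick-n-swap model that uses exactly π.support.card + π.cycleType.card pick-n-swap operations (the minimum possible) and whose total end-effector travel is at most Σ_{q} dist(π⁻¹ q, q) + (π.cycleType.card + 1) · √(m₁² + m₂²). -/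
/-!
A cycle `c` of `π` through `x` of length `k` is sorted by `k + 1` pick-n-swaps: pick at `x`, then
visit `c x, c² x, …, cᵏ x = x`, each time dropping the held item into its home cell and picking up
the item found there, whose home is the next cell of the walk. Inside the cycle the walk travels
exactly `Σ_q dist(q, c q)`, which after reindexing is the cycle's share of `Σ_q dist(π⁻¹ q, q)`.
The walks of the disjoint cycles are concatenated; each is entered by one jump of length at most
the grid diameter `√(m₁² + m₂²)`, and one more such jump returns to the rest position.
-/

open Equiv Equiv.Perm Finset

section Execution

variable {α : Type*} [DecidableEq α]

theorem pnsExec_append (st : (α → Option α) × Option α) (l₁ l₂ : List α) :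
    pnsExec st (l₁ ++ l₂) = pnsExec (pnsExec st l₁) l₂ :=
  List.foldl_append

/-- Each cell of the walk but the last holds the label of the next one, so every drop puts the held
item home. -/
theorem pnsExec_iterate (f : α → α) :
    ∀ (n : ℕ) (a : α → Option α) (y : α), (List.iterate f y (n + 1)).Nodup →
      (∀ z ∈ List.iterate f y n, a z = some (f z)) →
      pnsExec (a, some y) (List.iterate f y (n + 1)) =
        (fun z => if z ∈ List.iterate f y (n + 1) then some z else a z, a (f^[n] y))
  | 0, a, y, _, _ => by
    refine Prod.ext (funext fun z => ?_) rfl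
    by_cases hz : z = y <;> simp [pnsExec, pnsStep, hz]
  | n + 1, a, y, hnd, ha => by
    have hy : y ∉ List.iterate f (f y) (n + 1) := (List.nodup_cons.mp hnd).1
    have hlast : f^[n] (f y) ∈ List.iterate f (f y) (n + 1) :=
      List.mem_iterate.mpr ⟨n, n.lt_succ_self, rfl⟩
    have hstep : pnsStep (a, some y) y = (Function.update a y (some y), some (f y)) := by
      rw [pnsStep, ← ha y (List.mem_cons_self ..)]
    have ih := pnsExec_iterate f n (Function.update a y (some y)) (f y)
      (List.nodup_cons.mp hnd).2 fun z hz => by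
        have hzy : z ≠ y := by
          rintro rfl
          obtain ⟨m, hm, hzm⟩ := List.mem_iterate.mp hz
          exact hy (List.mem_iterate.mpr ⟨m, by omega, hzm⟩)
        rw [Function.update_of_ne hzy, ha z (List.mem_cons_of_mem _ hz)]
    change pnsExec (pnsStep (a, some y) y) (List.iterate f (f y) (n + 1)) = _
    rw [hstep, ih, Function.update_of_ne (ne_of_mem_of_not_mem hlast hy)]
    refine Prod.ext (funext fun z => ?_) rfl
    by_cases hz : z = y
    · subst hz; simp [List.iterate]
    · simp [List.iterate, hz]

end Execution

section Sorting

variable {α : Type*} [DecidableEq α]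

/-- Quantifying over the displacement `τ` of the other items is what lets plans for disjoint
permutations be concatenated. -/
def Sorts (σ : Perm α) (plan : List α) : Prop :=
  ∀ τ : Perm α, σ.Disjoint τ →
    pnsExec (fun p => some ((σ * τ) p), none) plan = (fun p => some (τ p), none)

theorem Sorts.validPlan {π : Perm α} {plan : List α} (h : Sorts π plan) : ValidPlan π plan := by
  simpa [ValidPlan] using h 1 (disjoint_one_right π)

theorem sorts_one : Sorts (1 : Perm α) [] := fun τ _ => by simp [pnsExec]

variable [Fintype α]

theorem Sorts.append {σ σ' : Perm α} {l l' : List α} (h : Sorts σ l) (h' : Sorts σ' l')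
    (hσσ' : σ.Disjoint σ') : Sorts (σ * σ') (l ++ l') := by
  intro τ hτ
  obtain ⟨hστ, hσ'τ⟩ : σ.Disjoint τ ∧ σ'.Disjoint τ := by
    rw [disjoint_iff_disjoint_support, hσσ'.support_mul, Finset.disjoint_union_left] at hτ
    exact ⟨disjoint_iff_disjoint_support.mpr hτ.1, disjoint_iff_disjoint_support.mpr hτ.2⟩
  rw [pnsExec_append, mul_assoc, h _ (hσσ'.mul_right hστ), h' τ hσ'τ]

theorem Equiv.Perm.IsCycle.mem_toList_iff {c : Perm α} (hc : c.IsCycle) {x z : α} (hx : c x ≠ x) :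
    z ∈ c.toList x ↔ c z ≠ z := by
  rw [Perm.mem_toList_iff, ← mem_support]
  exact ⟨fun h => h.1.mem_support_iff.mp h.2,
    fun hz => ⟨hc.sameCycle hx (mem_support.mp hz), mem_support.mpr hx⟩⟩

theorem Equiv.Perm.IsCycle.sorts {c : Perm α} (hc : c.IsCycle) {x : α} (hx : c x ≠ x) :
    Sorts c (x :: c.toList (c x)) := by
  intro τ hcτ
  have hτx : τ x = x := (hcτ x).resolve_left hx
  obtain ⟨n, hn⟩ : ∃ n, #c.support = n + 1 :=
    Nat.exists_eq_add_one.mpr (card_pos.mpr ⟨x, mem_support.mpr hx⟩)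
  have hlist : c.toList (c x) = List.iterate c (c x) (n + 1) := by
    rw [Equiv.Perm.toList, hc.cycleOf_eq (by simpa using hx), hn]
  have hclose : c^[n] (c x) = x := by
    rw [← Function.iterate_succ_apply, iterate_eq_pow, Nat.succ_eq_add_one, ← hn, ← hc.orderOf,
      pow_orderOf_eq_one, one_apply]
  have hnd : (List.iterate c (c x) (n + 1)).Nodup := hlist ▸ nodup_toList c (c x)
  have hmem (z : α) : z ∈ List.iterate c (c x) (n + 1) ↔ c z ≠ z := by
    rw [← hlist, hc.mem_toList_iff (by simpa using hx)]
  have hx_notMem : x ∉ List.iterate c (c x) n := by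
    rw [List.iterate_add, List.nodup_append] at hnd
    exact fun h => hnd.2.2 x h x (by simp [hclose]) rfl
  have hstep : pnsStep (fun p => some ((c * τ) p), none) x =
      (Function.update (fun p => some ((c * τ) p)) x none, some (c x)) := by
    simp [pnsStep, hτx]
  change pnsExec (pnsStep _ x) _ = _
  rw [hstep, hlist, pnsExec_iterate c n _ (c x) hnd, hclose]
  · refine Prod.ext (funext fun z => ?_) (by simp)
    dsimp only
    by_cases hz : c z = z
    · have hzx : z ≠ x := fun h => hx (h ▸ hz)
      rw [if_neg fun h => (hmem z).mp h hz, Function.update_of_ne hzx, hcτ.commute.eq, mul_apply,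
        hz]
    · rw [if_pos ((hmem z).mpr hz), (hcτ z).resolve_left hz]
  · intro z hz
    have hzx : z ≠ x := fun h => hx_notMem (h ▸ hz)
    have hcz : c z ≠ z := (hmem z).mp (List.mem_iterate.mpr (by
      obtain ⟨m, hm, rfl⟩ := List.mem_iterate.mp hz; exact ⟨m, by omega, rfl⟩))
    simp [hzx, (hcτ z).resolve_left hcz]

end Sorting

section Travel

variable {α : Type*} (d : α → α → ℝ)

def pathLength : α → List α → ℝ
  | _, [] => 0
  | a, b :: l => d a b + pathLength b l

theorem pathLength_append (a : α) (l₁ l₂ : List α) :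
    pathLength d a (l₁ ++ l₂) =
      pathLength d a l₁ + pathLength d ((a :: l₁).getLast (List.cons_ne_nil a l₁)) l₂ := by
  induction l₁ generalizing a with
  | nil => simp [pathLength]
  | cons b l ih => simp only [List.cons_append, pathLength, ih, List.getLast_cons_cons]; ring

theorem pathLength_iterate (f : α → α) (a : α) (n : ℕ) :
    pathLength d a (List.iterate f (f a) n) =
      ((List.iterate f a n).map fun p => d p (f p)).sum := by
  induction n generalizing a with
  | zero => simp [pathLength]
  | succ n ih => simp [List.iterate, pathLength, ih]

theorem sum_zip_cons_append_singleton (a b : α) (l : List α) :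
    (((a :: l).zip (l ++ [b])).map fun pq => d pq.1 pq.2).sum = pathLength d a (l ++ [b]) := by
  induction l generalizing a with
  | nil => simp [pathLength]
  | cons c l ih => simp [pathLength, ih]

variable [Fintype α]

def displacement (σ : Perm α) : ℝ := ∑ p, d p (σ p)

variable {d}

theorem displacement_one (hd : ∀ p, d p p = 0) : displacement d (1 : Perm α) = 0 := by
  simp [displacement, hd]

theorem Equiv.Perm.Disjoint.displacement_mul [DecidableEq α] {σ τ : Perm α} (h : σ.Disjoint τ)
    (hd : ∀ p, d p p = 0) : displacement d (σ * τ) = displacement d σ + displacement d τ := by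
  rw [displacement, displacement, displacement, ← sum_add_distrib]
  refine sum_congr rfl fun p _ => ?_
  rcases h p with hσ | hτ
  · rw [h.commute.eq, mul_apply, hσ, hd, zero_add]
  · rw [mul_apply, hτ, hd, add_zero]

theorem Equiv.Perm.IsCycle.pathLength_toList [DecidableEq α] {c : Perm α} (hc : c.IsCycle)
    {x : α} (hx : c x ≠ x) (hd : ∀ p, d p p = 0) :
    pathLength d x (c.toList (c x)) = displacement d c := by
  have hcx : c (c x) ≠ c x := by simpa using hx
  have hk : List.iterate c x #c.support = c.toList x := by
    rw [Equiv.Perm.toList, hc.cycleOf_eq hx]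
  rw [Equiv.Perm.toList, hc.cycleOf_eq hcx, pathLength_iterate, hk,
    ← List.sum_toFinset _ (nodup_toList c x)]
  have hfin : (c.toList x).toFinset = c.support := by
    ext z; simp [hc.mem_toList_iff hx]
  rw [hfin, displacement]
  exact sum_subset (subset_univ _) fun p _ hp => by rw [notMem_support.mp hp, hd]

end Travel

theorem exists_sorts_pathLength_le {α : Type*} [DecidableEq α] [Fintype α] {d : α → α → ℝ}
    {D : ℝ} (hd : ∀ p, d p p = 0) (hD : ∀ p q, d p q ≤ D) (σ : Perm α) :
    ∃ plan : List α, Sorts σ plan ∧ plan.length = #σ.support + Multiset.card σ.cycleType ∧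
      ∀ a, pathLength d a plan ≤ displacement d σ + Multiset.card σ.cycleType * D := by
  induction σ using cycle_induction_on with
  | base_one => exact ⟨[], sorts_one, by simp, fun a => by simp [pathLength, displacement_one hd]⟩
  | base_cycles c hc =>
    obtain ⟨x, hx, -⟩ := id hc
    have hcx : c (c x) ≠ c x := by simpa using hx
    refine ⟨x :: c.toList (c x), hc.sorts hx, by simp [hc.cycleType, hc.cycleOf_eq hcx],
      fun a => ?_⟩
    rw [pathLength, hc.pathLength_toList hx hd, hc.cycleType]
    simpa [add_comm] using hD a x
  | induction_disjoint σ τ hστ _ ihσ ihτ =>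
    obtain ⟨l, hl, hlen, hpath⟩ := ihσ
    obtain ⟨l', hl', hlen', hpath'⟩ := ihτ
    refine ⟨l ++ l', hl.append hl' hστ, ?_, fun a => ?_⟩
    · rw [List.length_append, hlen, hlen', hστ.card_support_mul, hστ.cycleType_mul,
        Multiset.card_add]
      ring
    · rw [pathLength_append, hστ.displacement_mul hd, hστ.cycleType_mul, Multiset.card_add]
      push_cast
      linarith [hpath a, hpath' ((a :: l).getLast (List.cons_ne_nil a l))]

section Grid

variable {m₁ m₂ : ℕ}

theorem Fin.cast_sub_sq_le_sq {n : ℕ} (i j : Fin n) :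
    (((i : ℕ) : ℝ) - (j : ℕ)) ^ 2 ≤ (n : ℝ) ^ 2 := by
  have hi : ((i : ℕ) : ℝ) < n := by exact_mod_cast i.isLt
  have hj : ((j : ℕ) : ℝ) < n := by exact_mod_cast j.isLt
  exact sq_le_sq' (by linarith [(j : ℕ).cast_nonneg (α := ℝ)])
    (by linarith [(i : ℕ).cast_nonneg (α := ℝ)])

theorem dist2D_self (p : Fin m₁ × Fin m₂) : dist2D p p = 0 := by
  simp [dist2D]

theorem dist2D_le (p q : Fin m₁ × Fin m₂) :
    dist2D p q ≤ Real.sqrt ((m₁ : ℝ) ^ 2 + (m₂ : ℝ) ^ 2) :=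
  Real.sqrt_le_sqrt (add_le_add (Fin.cast_sub_sq_le_sq _ _) (Fin.cast_sub_sq_le_sq _ _))

end Grid

/-- There is a valid plan for `π` in the two-dimensional pick-n-swap model using
exactly the minimum number `π.support.card + π.cycleType.card` of pick-n-swap
operations whose total end-effector travel is at most
`Σ_q dist(π⁻¹ q, q) + (π.cycleType.card + 1) · √(m₁² + m₂²)`. -/
theorem exists_near_opt_plan_2D {m₁ m₂ : ℕ} (h₁ : 0 < m₁) (h₂ : 0 < m₂)
    (π : Equiv.Perm (Fin m₁ × Fin m₂)) :
    ∃ plan : List (Fin m₁ × Fin m₂), ValidPlan π plan ∧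
      plan.length = π.support.card + Multiset.card π.cycleType ∧
      travel2D h₁ h₂ plan ≤ (∑ q : Fin m₁ × Fin m₂, dist2D (π⁻¹ q) q) +
        ((Multiset.card π.cycleType : ℝ) + 1) *
          Real.sqrt ((m₁ : ℝ) ^ 2 + (m₂ : ℝ) ^ 2) := by
  obtain ⟨plan, hsorts, hlen, hpath⟩ := exists_sorts_pathLength_le dist2D_self dist2D_le π
  refine ⟨plan, hsorts.validPlan, hlen, ?_⟩
  have hdisp : ∑ q, dist2D (π⁻¹ q) q = displacement dist2D π := by
    rw [displacement, ← Equiv.sum_comp π]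
    simp
  set rest : Fin m₁ × Fin m₂ := (⟨0, h₁⟩, ⟨0, h₂⟩)
  rw [travel2D, sum_zip_cons_append_singleton, pathLength_append, hdisp]
  simp only [pathLength, add_zero]
  linarith [hpath rest, dist2D_le ((rest :: plan).getLast (List.cons_ne_nil _ _)) rest]
end

section
/- The mean Euclidean distance between two independent uniformly random points of the unit square equals (2 + √2 + 5·log(1 + √2))/15; that is, the integral over ([0,1]²) × ([0,1]²) (with respect to 4-dimensional Lebesgue measure) of √((x₁ − y₁)² + (x₂ − y₂)²) d(x₁,x₂,y₁,y₂) equals (2 + √2 + 5·Real.log (1 + √2))/15. -/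
/-!
For continuous `h` with `H₂'' = h`, two applications of the fundamental theorem of calculus give
`∫₀¹∫₀¹ h (x - y) dx dy = H₂ 1 + H₂ (-1) - 2 H₂ 0`. Applied to `t ↦ √(t² + c²)`, whose second
primitive is elementary, this yields the mean distance `segmentMeanDist c` between random points
of two parallel unit segments at distance `|c|`. Applied once more, to `segmentMeanDist`, whose
second primitive is again elementary, it yields the mean distance in the square. The terms
`c ^ n * |c|` and `c ^ n * log c` in these primitives are differentiable at `0` because they have
the form `c * g c` with `g` continuous and `g 0 = 0`.
-/

open Real Filter Topology MeasureTheory intervalIntegral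

theorem hasDerivAt_mul_of_continuousAt_zero {g : ℝ → ℝ} (hg : ContinuousAt g 0) (hg₀ : g 0 = 0) :
    HasDerivAt (fun x => x * g x) 0 0 := by
  rw [hasDerivAt_iff_tendsto_slope_zero]
  refine (hg₀ ▸ hg.tendsto).mono_left nhdsWithin_le_nhds |>.congr' ?_
  filter_upwards [self_mem_nhdsWithin] with t ht
  simp [inv_mul_cancel_left₀ (show t ≠ 0 from ht)]

theorem hasDerivAt_pow_succ_mul_abs (n : ℕ) (x : ℝ) :
    HasDerivAt (fun x => x ^ (n + 1) * |x|) ((n + 2) * x ^ n * |x|) x := by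
  rcases eq_or_ne x 0 with rfl | hx
  · have h := hasDerivAt_mul_of_continuousAt_zero (g := fun x : ℝ => x ^ n * |x|)
      (by fun_prop) (by simp)
    simpa [pow_succ', mul_assoc] using h
  · refine ((hasDerivAt_pow (n + 1) x).mul (hasDerivAt_abs hx)).congr_deriv ?_
    rw [pow_succ, mul_assoc (x ^ n), self_mul_sign, Nat.add_sub_cancel]
    push_cast
    ring

theorem hasDerivAt_pow_add_two_mul_log (n : ℕ) (x : ℝ) :
    HasDerivAt (fun x => x ^ (n + 2) * log x)
      ((n + 2) * x ^ (n + 1) * log x + x ^ (n + 1)) x := by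
  rcases eq_or_ne x 0 with rfl | hx
  · have h := hasDerivAt_mul_of_continuousAt_zero (g := fun x : ℝ => x ^ n * (x * log x))
      ((continuous_pow n).mul continuous_mul_log).continuousAt (by simp)
    convert h using 1
    · ext x; ring
    · simp
  · refine ((hasDerivAt_pow (n + 2) x).mul (hasDerivAt_log hx)).congr_deriv ?_
    field_simp
    push_cast
    ring

theorem integral_integral_sub_eq_of_hasDerivAt {E : Type*} [NormedAddCommGroup E]
    [NormedSpace ℝ E] [CompleteSpace E] {h H H₂ : ℝ → E} (hh : Continuous h)
    (hH : ∀ t, HasDerivAt H (h t) t) (hH₂ : ∀ t, HasDerivAt H₂ (H t) t) (a b : ℝ) :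
    ∫ y in a..b, ∫ x in a..b, h (x - y) = H₂ (b - a) + H₂ (a - b) - (2 : ℝ) • H₂ 0 := by
  have hHc : Continuous H := continuous_iff_continuousAt.2 fun t => (hH t).continuousAt
  have hH_sub (c : ℝ) : IntervalIntegrable (fun y => H (c - y)) volume a b :=
    (hHc.comp (continuous_sub_left c)).intervalIntegrable _ _
  have h_inner (y : ℝ) : ∫ x in a..b, h (x - y) = H (b - y) - H (a - y) := by
    rw [integral_comp_sub_right h y,
      integral_eq_sub_of_hasDerivAt (fun t _ => hH t) (hh.intervalIntegrable _ _)]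
  simp_rw [h_inner]
  rw [integral_sub (hH_sub b) (hH_sub a), integral_comp_sub_left H b, integral_comp_sub_left H a,
    integral_eq_sub_of_hasDerivAt (fun t _ => hH₂ t) (hHc.intervalIntegrable _ _),
    integral_eq_sub_of_hasDerivAt (fun t _ => hH₂ t) (hHc.intervalIntegrable _ _)]
  simp only [sub_self, two_smul]
  abel

theorem intervalIntegral_intervalIntegral_swap_of_continuous {E : Type*} [NormedAddCommGroup E]
    [NormedSpace ℝ E] [CompleteSpace E] {F : ℝ → ℝ → E} (hF : Continuous F.uncurry)
    (a b c d : ℝ) :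
    ∫ x in a..b, ∫ y in c..d, F x y = ∫ y in c..d, ∫ x in a..b, F x y :=
  intervalIntegral_intervalIntegral_swap <|
    (hF.continuousOn.integrableOn_compact (isCompact_uIcc.prod isCompact_uIcc)).mono_set
      (Set.prod_mono Set.uIoc_subset_uIcc Set.uIoc_subset_uIcc)

/- At `r = 0` the junk value `t / 0 = 0` leaves `t * |t| / 2` and `|t| ^ 3 / 6`, which are still
the primitives of `|t|` and `t * |t| / 2`. -/
noncomputable def hypotAntideriv (r t : ℝ) : ℝ :=
  (t * √(t ^ 2 + r ^ 2) + r ^ 2 * arsinh (t / r)) / 2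

noncomputable def hypotAntideriv₂ (r t : ℝ) : ℝ :=
  √(t ^ 2 + r ^ 2) ^ 3 / 6 + r ^ 2 / 2 * (t * arsinh (t / r) - √(t ^ 2 + r ^ 2))

theorem hasDerivAt_sqrt_sq_add_sq {r : ℝ} (hr : r ≠ 0) (t : ℝ) :
    HasDerivAt (fun t => √(t ^ 2 + r ^ 2)) (t / √(t ^ 2 + r ^ 2)) t := by
  refine (((hasDerivAt_pow 2 t).add_const _).sqrt (by positivity)).congr_deriv ?_
  field_simp
  ring

theorem hasDerivAt_arsinh_div {r : ℝ} (hr : 0 < r) (t : ℝ) :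
    HasDerivAt (fun t => arsinh (t / r)) (√(t ^ 2 + r ^ 2))⁻¹ t := by
  have hq : √(1 + (t / r) ^ 2) = √(t ^ 2 + r ^ 2) / r := by
    rw [div_pow, one_add_div (by positivity), sqrt_div' _ (sq_nonneg r), sqrt_sq hr.le, add_comm]
  refine ((hasDerivAt_id t).div_const r).arsinh.congr_deriv ?_
  simp only [id, hq, smul_eq_mul]
  field_simp

theorem hypotAntideriv_zero : hypotAntideriv 0 = fun t => t ^ (0 + 1) * |t| / 2 := by
  ext t
  simp [hypotAntideriv, sqrt_sq_eq_abs]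

theorem hypotAntideriv₂_zero : hypotAntideriv₂ 0 = fun t => t ^ (1 + 1) * |t| / 6 := by
  ext t
  rw [hypotAntideriv₂, zero_pow two_ne_zero, add_zero, sqrt_sq_eq_abs, pow_succ |t|, sq_abs]
  ring

theorem hasDerivAt_hypotAntideriv {r : ℝ} (hr : 0 ≤ r) (t : ℝ) :
    HasDerivAt (hypotAntideriv r) √(t ^ 2 + r ^ 2) t := by
  rcases hr.eq_or_lt with rfl | hr
  · rw [hypotAntideriv_zero, zero_pow two_ne_zero, add_zero, sqrt_sq_eq_abs]
    refine ((hasDerivAt_pow_succ_mul_abs 0 t).div_const 2).congr_deriv ?_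
    ring
  · have hs := hasDerivAt_sqrt_sq_add_sq hr.ne' t
    have hs2 : √(t ^ 2 + r ^ 2) ^ 2 = t ^ 2 + r ^ 2 := sq_sqrt (by positivity)
    have hs0 : √(t ^ 2 + r ^ 2) ≠ 0 := by positivity
    refine ((((hasDerivAt_id t).mul hs).add
      ((hasDerivAt_arsinh_div hr t).const_mul (r ^ 2))).div_const 2).congr_deriv ?_
    field_simp
    grind

theorem hasDerivAt_hypotAntideriv₂ {r : ℝ} (hr : 0 ≤ r) (t : ℝ) :
    HasDerivAt (hypotAntideriv₂ r) (hypotAntideriv r t) t := by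
  rcases hr.eq_or_lt with rfl | hr
  · rw [hypotAntideriv₂_zero, hypotAntideriv_zero]
    refine ((hasDerivAt_pow_succ_mul_abs 1 t).div_const 6).congr_deriv ?_
    ring
  · have hs := hasDerivAt_sqrt_sq_add_sq hr.ne' t
    have hs2 : √(t ^ 2 + r ^ 2) ^ 2 = t ^ 2 + r ^ 2 := sq_sqrt (by positivity)
    have hs0 : √(t ^ 2 + r ^ 2) ≠ 0 := by positivity
    refine (((hs.pow 3).div_const 6).add ((((hasDerivAt_id t).mul
      (hasDerivAt_arsinh_div hr t)).sub hs).const_mul (r ^ 2 / 2))).congr_deriv ?_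
    unfold hypotAntideriv
    field_simp
    grind

/- `log c = log |c|` for `c < 0`, so the formula is even in `c`. -/
noncomputable def segmentMeanDist (c : ℝ) : ℝ :=
  √(1 + c ^ 2) ^ 3 / 3 + c ^ 2 * log (1 + √(1 + c ^ 2)) - c ^ 2 * log c
    - c ^ 2 * √(1 + c ^ 2) + 2 * (c ^ 2 * |c|) / 3

theorem arsinh_inv_abs {c : ℝ} (hc : c ≠ 0) :
    arsinh |c|⁻¹ = log (1 + √(1 + c ^ 2)) - log c := by
  have hc' : 0 < |c| := abs_pos.2 hc
  have hq : √(1 + (c ^ 2)⁻¹) = √(1 + c ^ 2) / |c| := by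
    rw [← sqrt_sq_eq_abs, ← sqrt_div' _ (sq_nonneg c), add_div, div_self (by positivity),
      one_div, add_comm]
  rw [arsinh, inv_pow, sq_abs, hq, ← log_abs c, ← log_div (by positivity) hc'.ne']
  ring_nf

theorem hypotAntideriv₂_second_difference (c : ℝ) :
    hypotAntideriv₂ |c| (1 - 0) + hypotAntideriv₂ |c| (0 - 1) - (2 : ℝ) • hypotAntideriv₂ |c| 0 =
      segmentMeanDist c := by
  rcases eq_or_ne c 0 with rfl | hc
  · norm_num [hypotAntideriv₂, segmentMeanDist]
  · have hc3 : |c| ^ 3 = c ^ 2 * |c| := by rw [pow_succ, sq_abs]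
    simp only [hypotAntideriv₂, segmentMeanDist, sq_abs, zero_sub, sub_zero, neg_div, arsinh_neg,
      one_div, arsinh_inv_abs hc, zero_div, arsinh_zero, smul_eq_mul, neg_one_sq, one_pow]
    rw [zero_pow two_ne_zero, zero_add, sqrt_sq_eq_abs]
    linear_combination (-1 / 3 : ℝ) * hc3

theorem integral_integral_sqrt_sub_sq_add_sq (c : ℝ) :
    ∫ y in (0 : ℝ)..1, ∫ x in (0 : ℝ)..1, √((x - y) ^ 2 + c ^ 2) = segmentMeanDist c := by
  have h := integral_integral_sub_eq_of_hasDerivAt (h := fun t => √(t ^ 2 + |c| ^ 2))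
    (by fun_prop) (hasDerivAt_hypotAntideriv (abs_nonneg c))
    (hasDerivAt_hypotAntideriv₂ (abs_nonneg c)) 0 1
  simp only [sq_abs] at h
  rw [h, hypotAntideriv₂_second_difference]

noncomputable def segmentMeanDistAntideriv (c : ℝ) : ℝ :=
  -(c * √(1 + c ^ 2) ^ 3) / 6 + 5 / 12 * (c * √(1 + c ^ 2)) + arsinh c / 12
    + c ^ 3 * log (1 + √(1 + c ^ 2)) / 3 - c ^ 3 * log c / 3 + c ^ 3 * |c| / 6

noncomputable def segmentMeanDistAntideriv₂ (c : ℝ) : ℝ :=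
  -(√(1 + c ^ 2) ^ 5) / 30 + √(1 + c ^ 2) ^ 3 / 6 - √(1 + c ^ 2) / 6
    + c * arsinh c / 12 + c ^ 4 * log (1 + √(1 + c ^ 2)) / 12
    - c ^ 4 * log c / 12 + c ^ 4 * |c| / 30

theorem continuous_segmentMeanDist : Continuous segmentMeanDist := by
  have hlog : Continuous fun c : ℝ => log (1 + √(1 + c ^ 2)) :=
    continuous_iff_continuousAt.2 fun c => (continuousAt_log (by positivity)).comp (by fun_prop)
  have hsqlog : Continuous fun c : ℝ => c ^ 2 * log c := by
    simpa only [sq, mul_assoc] using continuous_id'.fun_mul continuous_mul_log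
  unfold segmentMeanDist
  fun_prop

theorem hasDerivAt_sqrt_one_add_sq (c : ℝ) :
    HasDerivAt (fun c => √(1 + c ^ 2)) (c / √(1 + c ^ 2)) c := by
  refine (((hasDerivAt_pow 2 c).const_add 1).sqrt (by positivity)).congr_deriv ?_
  field_simp
  ring

theorem hasDerivAt_log_one_add_sqrt_one_add_sq (c : ℝ) :
    HasDerivAt (fun c => log (1 + √(1 + c ^ 2)))
      (c / (√(1 + c ^ 2) * (1 + √(1 + c ^ 2)))) c := by
  refine ((hasDerivAt_sqrt_one_add_sq c).const_add 1).log (by positivity) |>.congr_deriv ?_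
  field_simp

theorem hasDerivAt_segmentMeanDistAntideriv (c : ℝ) :
    HasDerivAt segmentMeanDistAntideriv (segmentMeanDist c) c := by
  have hs := hasDerivAt_sqrt_one_add_sq c
  have hl := hasDerivAt_log_one_add_sqrt_one_add_sq c
  have hs2 : √(1 + c ^ 2) ^ 2 = 1 + c ^ 2 := sq_sqrt (by positivity)
  have hs0 : √(1 + c ^ 2) ≠ 0 := by positivity
  have hs1 : 1 + √(1 + c ^ 2) ≠ 0 := by positivity
  refine (((((((hasDerivAt_id' c).fun_mul (hs.fun_pow 3)).fun_neg.div_const 6).fun_add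
    (((hasDerivAt_id' c).fun_mul hs).const_mul (5 / 12))).fun_add
    ((hasDerivAt_arsinh c).div_const 12)).fun_add
    (((hasDerivAt_pow 3 c).fun_mul hl).div_const 3)).fun_sub
    ((hasDerivAt_pow_add_two_mul_log 1 c).div_const 3)).fun_add
    ((hasDerivAt_pow_succ_mul_abs 2 c).div_const 6) |>.congr_deriv ?_
  unfold segmentMeanDist
  field_simp
  grind

theorem hasDerivAt_segmentMeanDistAntideriv₂ (c : ℝ) :
    HasDerivAt segmentMeanDistAntideriv₂ (segmentMeanDistAntideriv c) c := by
  have hs := hasDerivAt_sqrt_one_add_sq c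
  have hl := hasDerivAt_log_one_add_sqrt_one_add_sq c
  have hs2 : √(1 + c ^ 2) ^ 2 = 1 + c ^ 2 := sq_sqrt (by positivity)
  have hs0 : √(1 + c ^ 2) ≠ 0 := by positivity
  have hs1 : 1 + √(1 + c ^ 2) ≠ 0 := by positivity
  refine (((((((hs.fun_pow 5).fun_neg.div_const 30).fun_add
    ((hs.fun_pow 3).div_const 6)).fun_sub (hs.div_const 6)).fun_add
    (((hasDerivAt_id' c).fun_mul (hasDerivAt_arsinh c)).div_const 12)).fun_add
    (((hasDerivAt_pow 4 c).fun_mul hl).div_const 12)).fun_sub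
    ((hasDerivAt_pow_add_two_mul_log 2 c).div_const 12)).fun_add
    ((hasDerivAt_pow_succ_mul_abs 3 c).div_const 30) |>.congr_deriv ?_
  unfold segmentMeanDistAntideriv
  field_simp
  grind

theorem segmentMeanDistAntideriv₂_second_difference :
    segmentMeanDistAntideriv₂ (1 - 0) + segmentMeanDistAntideriv₂ (0 - 1)
        - (2 : ℝ) • segmentMeanDistAntideriv₂ 0 =
      (2 + √2 + 5 * log (1 + √2)) / 15 := by
  have hs2 : √2 ^ 2 = 2 := sq_sqrt zero_le_two
  have harsinh : arsinh 1 = log (1 + √2) := by norm_num [arsinh]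
  simp only [segmentMeanDistAntideriv₂, sub_zero, zero_sub, neg_one_sq, one_pow, log_neg_eq_log,
    log_one, arsinh_neg, arsinh_zero, harsinh, smul_eq_mul, one_add_one_eq_two, abs_neg, abs_one,
    abs_zero, mul_zero, add_zero, sqrt_one, ne_eq, OfNat.ofNat_ne_zero, not_false_eq_true,
    zero_pow]
  linear_combination (-(√2 / 15) * (√2 ^ 2 - 3)) * hs2

/-- The mean Euclidean distance between two independent uniformly random points of
the unit square equals `(2 + √2 + 5·log(1 + √2))/15`. -/
theorem mean_distance_unit_square :
    (∫ y₂ in (0:ℝ)..1, ∫ y₁ in (0:ℝ)..1, ∫ x₂ in (0:ℝ)..1, ∫ x₁ in (0:ℝ)..1,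
        Real.sqrt ((x₁ - y₁) ^ 2 + (x₂ - y₂) ^ 2)) =
      (2 + Real.sqrt 2 + 5 * Real.log (1 + Real.sqrt 2)) / 15 := by
  have h_inner (y₂ : ℝ) : ∫ y₁ in (0:ℝ)..1, ∫ x₂ in (0:ℝ)..1, ∫ x₁ in (0:ℝ)..1,
      √((x₁ - y₁) ^ 2 + (x₂ - y₂) ^ 2) = ∫ x₂ in (0:ℝ)..1, segmentMeanDist (x₂ - y₂) := by
    rw [intervalIntegral_intervalIntegral_swap_of_continuous
      (continuous_parametric_intervalIntegral_of_continuous' (by fun_prop) 0 1)]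
    simp only [integral_integral_sqrt_sub_sq_add_sq]
  simp only [h_inner]
  rw [integral_integral_sub_eq_of_hasDerivAt continuous_segmentMeanDist
    hasDerivAt_segmentMeanDistAntideriv hasDerivAt_segmentMeanDistAntideriv₂ 0 1]
  exact segmentMeanDistAntideriv₂_second_difference
end
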